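/- arXiv:2410.05533 — 11 statements merged into one kernel-verified Lean document; each statement's English description precedes it below -/
import Mathlib

section
/- Let μ and μ' be two priors on a finite state set Ω with min_{ω∈Ω} μ(ω) ≥ p0 > 0, and let π be a signaling scheme assigning to each state ω a probability distribution π(·|ω) over a finite signal set S. Fix a signal s ∈ S such that Σ_{ω∈Ω} μ(ω)π(s|ω) > 0 and Σ_{ω∈Ω} μ'(ω)π(s|ω) > 0, and let μ_s and μ'_s denote the Bayesian posteriors induced by s under priors μ and μ' respectively, i.e., μ_s(ω) = μ(ω)π(s|ω)/Σ_{ω'} μ(ω')π(s|ω') and analogously for μ'_s. Then ‖μ_s − μ'_s‖₁ ≤ (2/p0)·‖μ − μ'‖₁, where ‖f‖₁ = Σ_{ω∈Ω} |f(ω)|. -/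
/-- Lipschitz continuity of the Bayesian posterior in the prior.
If two priors `μ, μ'` on a finite state set `Ω` (with `min μ ≥ p0 > 0`) are updated
with the same signaling scheme `π` on a signal `s` that has positive probability
under both priors, the induced posteriors differ in `ℓ₁` distance by at most
`(2 / p0)` times the `ℓ₁` distance of the priors. -/
theorem posterior_lipschitz
    {Ω S : Type*} [Fintype Ω] [Fintype S]
    (μ μ' : Ω → ℝ) (π : Ω → S → ℝ) (p0 : ℝ) (s : S)
    (hμ0 : ∀ ω, 0 ≤ μ ω) (hμ1 : ∑ ω, μ ω = 1)
    (hμ'0 : ∀ ω, 0 ≤ μ' ω) (hμ'1 : ∑ ω, μ' ω = 1)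
    (hπ0 : ∀ ω t, 0 ≤ π ω t) (hπ1 : ∀ ω, ∑ t, π ω t = 1)
    (hp0 : 0 < p0) (hmin : ∀ ω, p0 ≤ μ ω)
    (hs : 0 < ∑ ω, μ ω * π ω s) (hs' : 0 < ∑ ω, μ' ω * π ω s) :
    ∑ ω, |μ ω * π ω s / (∑ ω', μ ω' * π ω' s) -
          μ' ω * π ω s / (∑ ω', μ' ω' * π ω' s)| ≤
      (2 / p0) * ∑ ω, |μ ω - μ' ω| := by
  set A := ∑ ω, μ ω * π ω s with hA
  set B := ∑ ω, μ' ω * π ω s with hB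
  have hAne : A ≠ 0 := ne_of_gt hs
  have hBne : B ≠ 0 := ne_of_gt hs'
  set D := ∑ ω, |μ ω - μ' ω| with hD
  have hπle : ∀ ω, π ω s ≤ A / p0 := by
    intro ω
    rw [le_div_iff₀ hp0]
    calc π ω s * p0 ≤ π ω s * μ ω :=
          mul_le_mul_of_nonneg_left (hmin ω) (hπ0 ω s)
      _ = μ ω * π ω s := mul_comm _ _
      _ ≤ A := Finset.single_le_sum
          (fun i _ => mul_nonneg (hμ0 i) (hπ0 i s)) (Finset.mem_univ ω)
  have hABle : |A - B| ≤ ∑ ω, |μ ω - μ' ω| * π ω s := by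
    rw [hA, hB, ← Finset.sum_sub_distrib]
    calc |∑ ω, (μ ω * π ω s - μ' ω * π ω s)|
        ≤ ∑ ω, |μ ω * π ω s - μ' ω * π ω s| := Finset.abs_sum_le_sum_abs _ _
      _ = ∑ ω, |μ ω - μ' ω| * π ω s := by
          refine Finset.sum_congr rfl fun ω _ => ?_
          rw [← sub_mul, abs_mul, abs_of_nonneg (hπ0 ω s)]
  have hsum : ∑ ω, |μ ω - μ' ω| * π ω s ≤ A / p0 * D := by
    rw [hD, Finset.mul_sum]
    refine Finset.sum_le_sum fun ω _ => ?_
    rw [mul_comm (A / p0)]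
    exact mul_le_mul_of_nonneg_left (hπle ω) (abs_nonneg _)
  have hpoint : ∀ ω, |μ ω * π ω s / A - μ' ω * π ω s / B| ≤
      |μ ω - μ' ω| * π ω s / A + μ' ω * π ω s * |A - B| / (A * B) := by
    intro ω
    have h1 : μ ω * π ω s / A - μ' ω * π ω s / B
        = (μ ω - μ' ω) * π ω s / A + μ' ω * π ω s * (B - A) / (A * B) := by
      field_simp
      ring
    rw [h1]
    calc |(μ ω - μ' ω) * π ω s / A + μ' ω * π ω s * (B - A) / (A * B)|
        ≤ |(μ ω - μ' ω) * π ω s / A| + |μ' ω * π ω s * (B - A) / (A * B)| :=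
          abs_add_le _ _
      _ = |μ ω - μ' ω| * π ω s / A + μ' ω * π ω s * |A - B| / (A * B) := by
          rw [abs_div, abs_div, abs_mul, abs_mul, abs_mul,
            abs_of_nonneg (hπ0 ω s), abs_of_nonneg (hμ'0 ω),
            abs_of_nonneg hs.le, abs_of_nonneg (mul_nonneg hs.le hs'.le),
            abs_sub_comm B A]
  have hBsum : ∑ ω, μ' ω * π ω s * |A - B| = B * |A - B| := by
    rw [← Finset.sum_mul, ← hB]
  calc ∑ ω, |μ ω * π ω s / A - μ' ω * π ω s / B|
      ≤ ∑ ω, (|μ ω - μ' ω| * π ω s / A + μ' ω * π ω s * |A - B| / (A * B)) :=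
        Finset.sum_le_sum fun ω _ => hpoint ω
    _ = (∑ ω, |μ ω - μ' ω| * π ω s) / A + |A - B| / A := by
        rw [Finset.sum_add_distrib, ← Finset.sum_div, ← Finset.sum_div, hBsum,
          mul_comm A B, mul_div_mul_left _ _ hBne]
    _ ≤ (A / p0 * D) / A + (A / p0 * D) / A := by
        gcongr
        exact hABle.trans hsum
    _ = (2 / p0) * D := by
        field_simp
        ring
end

section
/- Assume: Ω and A are finite sets; u, v: A × Ω → [0,1]; μ̂ ∈ Δ(Ω) with min_{ω∈Ω} μ̂(ω) ≥ p0 > 0; there exists D > 0 such that for every action a ∈ A there is a belief η_a ∈ Δ(Ω) with Σ_ω η_a(ω) v(a,ω) ≥ Σ_ω η_a(ω) v(a',ω) + D for every a' ∈ A with a' ≠ a; and 0 < ε ≤ p0²D/2. Let π̂ be a direct signaling scheme that is persuasive for μ̂. Then there exists a direct signaling scheme π̃ such that (i) π̃ is persuasive for every prior μ ∈ Δ(Ω) with ‖μ − μ̂‖₁ ≤ ε, and (ii) U(μ̂, π̃) ≥ U(μ̂, π̂) − 6ε/(p0²D). -/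
open Finset

/-- A direct signaling scheme: every row `π ω ·` is a probability distribution on actions. -/
def IsSignalScheme {Ω A : Type*} [Fintype A] (π : Ω → A → ℝ) : Prop :=
  (∀ ω a, 0 ≤ π ω a) ∧ ∀ ω, ∑ a, π ω a = 1

/-- A direct signaling scheme `π` is persuasive for prior `μ`: every recommended action
is a best response for the receiver with utility `v`. -/
def IsPersuasive {Ω A : Type*} [Fintype Ω] (v : A → Ω → ℝ) (μ : Ω → ℝ)
    (π : Ω → A → ℝ) : Prop :=
  ∀ a a' : A, 0 ≤ ∑ ω, μ ω * π ω a * (v a ω - v a' ω)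

/-- The designer's (obedient) expected utility. -/
def designerU {Ω A : Type*} [Fintype Ω] [Fintype A] (u : A → Ω → ℝ) (μ : Ω → ℝ)
    (π : Ω → A → ℝ) : ℝ :=
  ∑ ω, μ ω * ∑ a, π ω a * u a ω

/-!
For each action `a`, split `μ̂ = p0 • η_a + (μ̂ - p0 • η_a)` (the remainder is nonnegative since
`μ̂ ≥ p0` and `η_a ≤ 1`) and recommend `a` on the first part and a best response `r a` to the
remainder: this scheme is obedient at `μ̂` with margin `p0 D` at `a`. Mixing these schemes with
weights `w` solving `(2 - p0) w = h + (1 - p0) r_* w`, where `h` is the law of the recommendation of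
`π̂`, gives a scheme `χ` whose margin at `a` is at least `p0 D / 2` times `h a` plus the probability
that `χ` recommends `a`. Since `μ̂ ≥ p0`, moving the prior by `ε` in `ℓ₁` lowers the margin at `a`
by at most `ε / p0` times the probability of recommending `a`, so `(1 - t) π̂ + t χ` with
`t = 2ε / (p0² D)` stays persuasive and loses at most `t` of the designer's utility.
-/

section FiberSum

variable {A : Type*} [Fintype A] [DecidableEq A]

theorem sum_filter_iterate_succ_eq (r : A → A) (g : A → ℝ) (k : ℕ) (a : A) :
    ∑ b with r^[k + 1] b = a, g b = ∑ c with r c = a, ∑ b with r^[k] b = c, g b := by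
  calc ∑ b with r^[k + 1] b = a, g b
      = ∑ b, ∑ c with r c = a, if r^[k] b = c then g b else 0 := by
        simp [sum_filter, Function.iterate_succ_apply']
    _ = _ := by rw [sum_comm]; simp [sum_filter]

/-- The Neumann series `w = ∑ₖ qᵏ (r_*)ᵏ g` of the push-forward `r_*` along `r`. -/
theorem exists_nonneg_eq_add_mul_sum_fiber (r : A → A) {g : A → ℝ} (hg : 0 ≤ g) {q : ℝ}
    (hq0 : 0 ≤ q) (hq1 : q < 1) :
    ∃ w : A → ℝ, 0 ≤ w ∧ ∀ a, w a = g a + q * ∑ c with r c = a, w c := by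
  set term : A → ℕ → ℝ := fun a k => q ^ k * ∑ b with r^[k] b = a, g b
  have hterm_nonneg : ∀ a k, 0 ≤ term a k := fun a k =>
    mul_nonneg (pow_nonneg hq0 k) (sum_nonneg fun b _ => hg b)
  have hsummable : ∀ a, Summable (term a) := fun a =>
    .of_nonneg_of_le (hterm_nonneg a)
      (fun k => mul_le_mul_of_nonneg_left
        (sum_le_univ_sum_of_nonneg fun b => hg b) (pow_nonneg hq0 k))
      ((summable_geometric_of_lt_one hq0 hq1).mul_right (∑ b, g b))
  refine ⟨fun a => ∑' k, term a k, fun a => tsum_nonneg (hterm_nonneg a), fun a => ?_⟩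
  dsimp only
  rw [(hsummable a).tsum_eq_zero_add, ← Summable.tsum_finsetSum fun c _ => hsummable c,
    ← tsum_mul_left]
  congr 1
  · show q ^ 0 * ∑ b with r^[0] b = a, g b = g a
    rw [pow_zero, one_mul, sum_filter]
    convert Fintype.sum_ite_eq' a g
    rfl
  · refine tsum_congr fun k => ?_
    simp only [term, sum_filter_iterate_succ_eq, mul_sum, pow_succ]
    ring_nf

end FiberSum

section Schemes

variable {Ω A : Type*}

theorem IsSignalScheme.sum_smul [Fintype A] {ι : Type*} {s : Finset ι} {w : ι → ℝ}
    {π : ι → Ω → A → ℝ} (hw0 : ∀ i ∈ s, 0 ≤ w i) (hw1 : ∑ i ∈ s, w i = 1)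
    (hπ : ∀ i ∈ s, IsSignalScheme (π i)) : IsSignalScheme (∑ i ∈ s, w i • π i) := by
  refine ⟨fun ω a => ?_, fun ω => ?_⟩
  · simp only [Finset.sum_apply, Pi.smul_apply, smul_eq_mul]
    exact sum_nonneg fun i hi => mul_nonneg (hw0 i hi) ((hπ i hi).1 ω a)
  · simp only [Finset.sum_apply, Pi.smul_apply, smul_eq_mul]
    rw [sum_comm, ← hw1]
    exact sum_congr rfl fun i hi => by rw [← mul_sum, (hπ i hi).2 ω, mul_one]

theorem IsSignalScheme.one_sub_smul_add_smul [Fintype A] {π π' : Ω → A → ℝ} (hπ : IsSignalScheme π)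
    (hπ' : IsSignalScheme π') {t : ℝ} (ht0 : 0 ≤ t) (ht1 : t ≤ 1) :
    IsSignalScheme ((1 - t) • π + t • π') := by
  refine ⟨fun ω a => ?_, fun ω => ?_⟩
  · simp only [Pi.add_apply, Pi.smul_apply, smul_eq_mul]
    nlinarith [hπ.1 ω a, hπ'.1 ω a]
  · simp only [Pi.add_apply, Pi.smul_apply, smul_eq_mul, sum_add_distrib, ← mul_sum, hπ.2 ω,
      hπ'.2 ω]
    ring

theorem designerU_smul_add_smul [Fintype Ω] [Fintype A] (u : A → Ω → ℝ) (μ : Ω → ℝ)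
    (π π' : Ω → A → ℝ) (c c' : ℝ) :
    designerU u μ (c • π + c' • π') = c * designerU u μ π + c' * designerU u μ π' := by
  simp only [designerU, Pi.add_apply, Pi.smul_apply, smul_eq_mul, add_mul, sum_add_distrib,
    mul_add, mul_sum]
  congr 1 <;> exact sum_congr rfl fun _ _ => sum_congr rfl fun _ _ => by ring

theorem designerU_nonneg [Fintype Ω] [Fintype A] {u : A → Ω → ℝ} {μ : Ω → ℝ} {π : Ω → A → ℝ}
    (hu : ∀ a ω, 0 ≤ u a ω) (hμ : ∀ ω, 0 ≤ μ ω) (hπ : ∀ ω a, 0 ≤ π ω a) : 0 ≤ designerU u μ π :=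
  sum_nonneg fun ω _ => mul_nonneg (hμ ω) (sum_nonneg fun a _ => mul_nonneg (hπ ω a) (hu a ω))

theorem designerU_le_one [Fintype Ω] [Fintype A] {u : A → Ω → ℝ} {μ : Ω → ℝ} {π : Ω → A → ℝ}
    (hu : ∀ a ω, u a ω ≤ 1) (hμ0 : ∀ ω, 0 ≤ μ ω) (hμ1 : ∑ ω, μ ω = 1) (hπ : IsSignalScheme π) :
    designerU u μ π ≤ 1 := by
  have hrow : ∀ ω, ∑ a, π ω a * u a ω ≤ 1 := fun ω =>
    calc ∑ a, π ω a * u a ω ≤ ∑ a, π ω a :=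
          sum_le_sum fun a _ => mul_le_of_le_one_right (hπ.1 ω a) (hu a ω)
      _ = 1 := hπ.2 ω
  calc designerU u μ π ≤ ∑ ω, μ ω := sum_le_sum fun ω _ => mul_le_of_le_one_right (hμ0 ω) (hrow ω)
    _ = 1 := hμ1

variable [Fintype Ω]

def signalProb (μ : Ω → ℝ) (a : A) : (Ω → A → ℝ) →ₗ[ℝ] ℝ where
  toFun π := ∑ ω, μ ω * π ω a
  map_add' π π' := by simp only [Pi.add_apply, mul_add, sum_add_distrib]
  map_smul' c π := by
    simp only [Pi.smul_apply, smul_eq_mul, RingHom.id_apply, mul_sum]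
    exact sum_congr rfl fun _ _ => by ring

def obedienceMargin (v : A → Ω → ℝ) (μ : Ω → ℝ) (a a' : A) : (Ω → A → ℝ) →ₗ[ℝ] ℝ where
  toFun π := ∑ ω, μ ω * π ω a * (v a ω - v a' ω)
  map_add' π π' := by simp only [Pi.add_apply, mul_add, add_mul, sum_add_distrib]
  map_smul' c π := by
    simp only [Pi.smul_apply, smul_eq_mul, RingHom.id_apply, mul_sum]
    exact sum_congr rfl fun _ _ => by ring

@[simp]
theorem signalProb_apply (μ : Ω → ℝ) (a : A) (π : Ω → A → ℝ) :
    signalProb μ a π = ∑ ω, μ ω * π ω a := rfl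

@[simp]
theorem obedienceMargin_apply (v : A → Ω → ℝ) (μ : Ω → ℝ) (a a' : A) (π : Ω → A → ℝ) :
    obedienceMargin v μ a a' π = ∑ ω, μ ω * π ω a * (v a ω - v a' ω) := rfl

theorem isPersuasive_iff {v : A → Ω → ℝ} {μ : Ω → ℝ} {π : Ω → A → ℝ} :
    IsPersuasive v μ π ↔ ∀ a a', 0 ≤ obedienceMargin v μ a a' π := Iff.rfl

theorem obedienceMargin_self (v : A → Ω → ℝ) (μ : Ω → ℝ) (a : A) (π : Ω → A → ℝ) :
    obedienceMargin v μ a a π = 0 := by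
  simp

theorem signalProb_nonneg {μ : Ω → ℝ} {π : Ω → A → ℝ} (hμ : ∀ ω, 0 ≤ μ ω)
    (hπ : ∀ ω a, 0 ≤ π ω a) (a : A) : 0 ≤ signalProb μ a π :=
  sum_nonneg fun ω _ => mul_nonneg (hμ ω) (hπ ω a)

theorem sum_signalProb [Fintype A] {μ : Ω → ℝ} {π : Ω → A → ℝ} (hμ1 : ∑ ω, μ ω = 1)
    (hπ : IsSignalScheme π) : ∑ a, signalProb μ a π = 1 := by
  simp only [signalProb_apply]
  rw [sum_comm, ← hμ1]
  exact sum_congr rfl fun ω _ => by rw [← mul_sum, hπ.2 ω, mul_one]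

theorem obedienceMargin_sub_le {v : A → Ω → ℝ} (hv : ∀ a ω, v a ω ∈ Set.Icc (0 : ℝ) 1)
    {π : Ω → A → ℝ} (hπ : ∀ ω a, 0 ≤ π ω a) (μ μ' : Ω → ℝ) (a a' : A) :
    obedienceMargin v μ' a a' π - obedienceMargin v μ a a' π ≤ ∑ ω, |μ ω - μ' ω| * π ω a := by
  simp only [obedienceMargin_apply, ← sum_sub_distrib]
  refine sum_le_sum fun ω _ => ?_
  have hgap : |v a ω - v a' ω| ≤ 1 := by
    obtain ⟨h0, h1⟩ := hv a ω
    obtain ⟨h0', h1'⟩ := hv a' ω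
    exact abs_le.2 ⟨by linarith, by linarith⟩
  calc μ' ω * π ω a * (v a ω - v a' ω) - μ ω * π ω a * (v a ω - v a' ω)
      ≤ |(μ' ω - μ ω) * π ω a * (v a ω - v a' ω)| := by
        rw [← sub_mul, ← sub_mul]; exact le_abs_self _
    _ = |μ ω - μ' ω| * π ω a * |v a ω - v a' ω| := by
        rw [abs_mul, abs_mul, abs_sub_comm, abs_of_nonneg (hπ ω a)]
    _ ≤ |μ ω - μ' ω| * π ω a :=
        mul_le_of_le_one_right (mul_nonneg (abs_nonneg _) (hπ ω a)) hgap

theorem sum_abs_sub_mul_le_signalProb {μ μ' : Ω → ℝ} {p0 ε : ℝ} (hp0 : 0 < p0)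
    (hmin : ∀ ω, p0 ≤ μ' ω) (hball : ∑ ω, |μ ω - μ' ω| ≤ ε) {π : Ω → A → ℝ}
    (hπ : ∀ ω a, 0 ≤ π ω a) (a : A) :
    ∑ ω, |μ ω - μ' ω| * π ω a ≤ ε / p0 * signalProb μ' a π := by
  rw [signalProb_apply, mul_sum]
  refine sum_le_sum fun ω _ => ?_
  have hε : |μ ω - μ' ω| ≤ ε :=
    (single_le_sum (fun ω _ => abs_nonneg (μ ω - μ' ω)) (mem_univ ω)).trans hball
  have hpoint : ε ≤ ε / p0 * μ' ω := by
    calc ε = ε / p0 * p0 := (div_mul_cancel₀ ε hp0.ne').symm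
      _ ≤ ε / p0 * μ' ω :=
        mul_le_mul_of_nonneg_left (hmin ω) (div_nonneg ((abs_nonneg _).trans hε) hp0.le)
  rw [← mul_assoc]
  exact mul_le_mul_of_nonneg_right (hε.trans hpoint) (hπ ω a)

theorem isPersuasive_of_le_obedienceMargin {v : A → Ω → ℝ}
    (hv : ∀ a ω, v a ω ∈ Set.Icc (0 : ℝ) 1) {μ μ' : Ω → ℝ} {p0 ε : ℝ} (hp0 : 0 < p0)
    (hmin : ∀ ω, p0 ≤ μ' ω) (hball : ∑ ω, |μ ω - μ' ω| ≤ ε) {π : Ω → A → ℝ}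
    (hπ : ∀ ω a, 0 ≤ π ω a)
    (hmargin : ∀ a a', a' ≠ a → ε / p0 * signalProb μ' a π ≤ obedienceMargin v μ' a a' π) :
    IsPersuasive v μ π := by
  refine isPersuasive_iff.2 fun a a' => ?_
  rcases eq_or_ne a' a with rfl | ha
  · exact (obedienceMargin_self v μ a' π).ge
  linarith [obedienceMargin_sub_le hv hπ μ μ' a a',
    sum_abs_sub_mul_le_signalProb hp0 hmin hball hπ a, hmargin a a' ha]

theorem le_obedienceMargin_one_sub_smul_add_smul {v : A → Ω → ℝ} {μ : Ω → ℝ}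
    (hμ : ∀ ω, 0 ≤ μ ω) {π χ : Ω → A → ℝ} (hπ : ∀ ω a, 0 ≤ π ω a) (hχ : ∀ ω a, 0 ≤ χ ω a)
    (hpers : IsPersuasive v μ π) {κ t : ℝ} (hκ : 0 ≤ κ) (ht0 : 0 ≤ t) (ht1 : t ≤ 1) {a a' : A}
    (hχ_margin : κ * (signalProb μ a π + signalProb μ a χ) ≤ obedienceMargin v μ a a' χ) :
    t * κ * signalProb μ a ((1 - t) • π + t • χ) ≤
      obedienceMargin v μ a a' ((1 - t) • π + t • χ) := by
  have hmix : (1 - t) * signalProb μ a π + t * signalProb μ a χ ≤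
      signalProb μ a π + signalProb μ a χ := by
    nlinarith [signalProb_nonneg hμ hπ a, signalProb_nonneg hμ hχ a]
  simp only [map_add, map_smul, smul_eq_mul]
  calc t * κ * ((1 - t) * signalProb μ a π + t * signalProb μ a χ)
      ≤ t * (κ * (signalProb μ a π + signalProb μ a χ)) := by
        rw [mul_assoc]; gcongr
    _ ≤ t * obedienceMargin v μ a a' χ := by gcongr
    _ ≤ (1 - t) * obedienceMargin v μ a a' π + t * obedienceMargin v μ a a' χ :=
        le_add_of_nonneg_left (mul_nonneg (by linarith) (isPersuasive_iff.1 hpers a a'))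

end Schemes

section SplitScheme

variable {Ω A : Type*} [DecidableEq A]

/-- Under the prior `μ`, recommend `a` with joint law `ν` and `b` with the remainder `μ - ν`. -/
noncomputable def splitScheme (μ ν : Ω → ℝ) (a b : A) : Ω → A → ℝ := fun ω c =>
  (if c = a then ν ω / μ ω else 0) + (if c = b then (μ ω - ν ω) / μ ω else 0)

theorem isSignalScheme_splitScheme [Fintype A] {μ ν : Ω → ℝ} (hμ : ∀ ω, 0 < μ ω)
    (hν0 : ∀ ω, 0 ≤ ν ω) (hνμ : ∀ ω, ν ω ≤ μ ω) (a b : A) :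
    IsSignalScheme (splitScheme μ ν a b) := by
  refine ⟨fun ω c => ?_, fun ω => ?_⟩
  · have h1 : 0 ≤ ν ω / μ ω := div_nonneg (hν0 ω) (hμ ω).le
    have h2 : 0 ≤ (μ ω - ν ω) / μ ω := div_nonneg (sub_nonneg.2 (hνμ ω)) (hμ ω).le
    unfold splitScheme
    split_ifs <;> positivity
  · simp only [splitScheme, sum_add_distrib, Fintype.sum_ite_eq']
    rw [← add_div, add_sub_cancel, div_self (hμ ω).ne']

theorem sum_mul_splitScheme_mul [Fintype Ω] {μ : Ω → ℝ} (hμ : ∀ ω, μ ω ≠ 0) (ν f : Ω → ℝ)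
    (a b c : A) :
    ∑ ω, μ ω * splitScheme μ ν a b ω c * f ω =
      (if c = a then ∑ ω, ν ω * f ω else 0) + (if c = b then ∑ ω, (μ ω - ν ω) * f ω else 0) := by
  have hpoint : ∀ ω, μ ω * splitScheme μ ν a b ω c * f ω =
      (if c = a then ν ω * f ω else 0) + (if c = b then (μ ω - ν ω) * f ω else 0) := by
    intro ω
    unfold splitScheme
    split_ifs <;> field_simp [hμ ω] <;> ring
  rw [sum_congr rfl fun ω _ => hpoint ω, sum_add_distrib]
  split_ifs <;> simp

theorem signalProb_splitScheme [Fintype Ω] {μ : Ω → ℝ} (hμ : ∀ ω, μ ω ≠ 0) (ν : Ω → ℝ) (a b c : A) :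
    signalProb μ c (splitScheme μ ν a b) =
      (if c = a then ∑ ω, ν ω else 0) + (if c = b then ∑ ω, (μ ω - ν ω) else 0) := by
  simpa using sum_mul_splitScheme_mul hμ ν 1 a b c

theorem obedienceMargin_splitScheme [Fintype Ω] {v : A → Ω → ℝ} {μ : Ω → ℝ} (hμ : ∀ ω, μ ω ≠ 0)
    (ν : Ω → ℝ) (a b c c' : A) :
    obedienceMargin v μ c c' (splitScheme μ ν a b) =
      (if c = a then ∑ ω, ν ω * (v c ω - v c' ω) else 0) +
        (if c = b then ∑ ω, (μ ω - ν ω) * (v c ω - v c' ω) else 0) :=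
  sum_mul_splitScheme_mul hμ ν _ a b c

end SplitScheme

section Construction

variable {Ω A : Type*} [Fintype Ω] [Fintype A] [DecidableEq A]

theorem exists_obedient_splitScheme {v : A → Ω → ℝ} {μ : Ω → ℝ} {p0 D : ℝ}
    (hμ1 : ∑ ω, μ ω = 1) (hp0 : 0 < p0) (hmin : ∀ ω, p0 ≤ μ ω) (hD : 0 ≤ D) {a : A}
    {η : Ω → ℝ} (hη0 : ∀ ω, 0 ≤ η ω) (hη1 : ∑ ω, η ω = 1)
    (hηD : ∀ a' : A, a' ≠ a → (∑ ω, η ω * v a' ω) + D ≤ ∑ ω, η ω * v a ω) :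
    ∃ (σ : Ω → A → ℝ) (b : A), IsSignalScheme σ ∧
      (∀ c c', 0 ≤ obedienceMargin v μ c c' σ) ∧
      (∀ a', a' ≠ a → p0 * D ≤ obedienceMargin v μ a a' σ) ∧
      ∀ c, signalProb μ c σ = (if c = a then p0 else 0) + (if c = b then 1 - p0 else 0) := by
  have hμ : ∀ ω, 0 < μ ω := fun ω => hp0.trans_le (hmin ω)
  have hμ' : ∀ ω, μ ω ≠ 0 := fun ω => (hμ ω).ne'
  set ν : Ω → ℝ := fun ω => p0 * η ω with hν
  have hνμ : ∀ ω, ν ω ≤ μ ω := fun ω =>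
    (mul_le_of_le_one_right hp0.le
      ((single_le_sum (fun ω _ => hη0 ω) (mem_univ ω)).trans hη1.le)).trans (hmin ω)
  have hν_gap : ∀ a', a' ≠ a → p0 * D ≤ ∑ ω, ν ω * (v a ω - v a' ω) := fun a' ha' => by
    simp only [hν, mul_sub, sum_sub_distrib, mul_assoc, ← mul_sum]
    nlinarith [hηD a' ha']
  have hν_gap_nonneg : ∀ a', 0 ≤ ∑ ω, ν ω * (v a ω - v a' ω) := fun a' => by
    rcases eq_or_ne a' a with rfl | ha'
    · simp
    · exact (mul_nonneg hp0.le hD).trans (hν_gap a' ha')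
  obtain ⟨b, hb⟩ := @Finite.exists_max _ _ _ ⟨a⟩ _ fun b => ∑ ω, (μ ω - ν ω) * v b ω
  have hρ_gap : ∀ b', 0 ≤ ∑ ω, (μ ω - ν ω) * (v b ω - v b' ω) := fun b' => by
    simp only [mul_sub, sum_sub_distrib]
    linarith [hb b']
  refine ⟨splitScheme μ ν a b, b,
    isSignalScheme_splitScheme hμ (fun ω => mul_nonneg hp0.le (hη0 ω)) hνμ a b,
    fun c c' => ?_, fun a' ha' => ?_, fun c => ?_⟩
  · rw [obedienceMargin_splitScheme hμ']
    refine add_nonneg ?_ ?_ <;> split_ifs with hc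
    exacts [hc ▸ hν_gap_nonneg c', le_rfl, hc ▸ hρ_gap c', le_rfl]
  · have hρ : 0 ≤ if a = b then ∑ ω, (μ ω - ν ω) * (v a ω - v a' ω) else 0 := by
      split_ifs with hab
      exacts [hab ▸ hρ_gap a', le_rfl]
    rw [obedienceMargin_splitScheme hμ', if_pos rfl]
    linarith [hν_gap a' ha']
  · rw [signalProb_splitScheme hμ', sum_sub_distrib, hμ1, hν, ← mul_sum, hη1, mul_one]

theorem exists_isSignalScheme_le_obedienceMargin {v : A → Ω → ℝ} {μ : Ω → ℝ} {p0 D : ℝ}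
    (hμ1 : ∑ ω, μ ω = 1) (hp0 : 0 < p0) (hmin : ∀ ω, p0 ≤ μ ω) (hD : 0 ≤ D)
    (hη : ∀ a : A, ∃ η : Ω → ℝ, (∀ ω, 0 ≤ η ω) ∧ (∑ ω, η ω = 1) ∧
      ∀ a' : A, a' ≠ a → (∑ ω, η ω * v a' ω) + D ≤ ∑ ω, η ω * v a ω)
    {h : A → ℝ} (hh0 : 0 ≤ h) (hh1 : ∑ a, h a = 1) :
    ∃ χ : Ω → A → ℝ, IsSignalScheme χ ∧
      ∀ a a', a' ≠ a → p0 * D / 2 * (h a + signalProb μ a χ) ≤ obedienceMargin v μ a a' χ := by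
  have hp0_le : p0 ≤ 1 := by
    obtain ⟨ω⟩ : Nonempty Ω := by
      by_contra hΩ
      simp [not_nonempty_iff.1 hΩ] at hμ1
    exact (hmin ω).trans (hμ1 ▸ single_le_sum (fun ω _ => hp0.le.trans (hmin ω)) (mem_univ ω))
  choose η hη0 hη1 hηD using hη
  choose σ r hσ hσ_nonneg hσ_gap hσ_prob using fun a =>
    exists_obedient_splitScheme hμ1 hp0 hmin hD (hη0 a) (hη1 a) (hηD a)
  obtain ⟨w, hw0, hw⟩ := exists_nonneg_eq_add_mul_sum_fiber r
    (g := fun a => h a / (2 - p0)) (fun a => div_nonneg (hh0 a) (by linarith))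
    (q := (1 - p0) / (2 - p0)) (div_nonneg (by linarith) (by linarith))
    ((div_lt_one (by linarith)).2 (by linarith))
  have hw' : ∀ a, (2 - p0) * w a = h a + (1 - p0) * ∑ c with r c = a, w c := fun a => by
    rw [hw a]
    field_simp [show (2 : ℝ) - p0 ≠ 0 by linarith]
  have hw1 : ∑ a, w a = 1 := by
    have hsum := sum_congr rfl fun a (_ : a ∈ univ) => hw' a
    rw [← mul_sum, sum_add_distrib, hh1, ← mul_sum, sum_fiberwise] at hsum
    linear_combination hsum
  refine ⟨∑ c, w c • σ c, IsSignalScheme.sum_smul (fun c _ => hw0 c) hw1 (fun c _ => hσ c),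
    fun a a' ha => ?_⟩
  have hprob : signalProb μ a (∑ c, w c • σ c) = p0 * w a + (1 - p0) * ∑ c with r c = a, w c := by
    simp [hσ_prob, mul_add, sum_add_distrib, sum_filter, mul_sum, eq_comm, mul_comm]
  have hmargin : w a * (p0 * D) ≤ obedienceMargin v μ a a' (∑ c, w c • σ c) := by
    simp only [map_sum, map_smul, smul_eq_mul]
    calc w a * (p0 * D) ≤ w a * obedienceMargin v μ a a' (σ a) :=
          mul_le_mul_of_nonneg_left (hσ_gap a a' ha) (hw0 a)
      _ ≤ ∑ c, w c * obedienceMargin v μ a a' (σ c) :=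
          single_le_sum (fun c _ => mul_nonneg (hw0 c) (hσ_nonneg c a a')) (mem_univ a)
  have htotal : h a + signalProb μ a (∑ c, w c • σ c) = 2 * w a := by
    rw [hprob]
    linear_combination -hw' a
  rw [htotal]
  linarith

end Construction

theorem robustification_general
    {Ω A : Type*} [Fintype Ω] [Fintype A]
    (u v : A → Ω → ℝ) (μhat : Ω → ℝ) (p0 D ε : ℝ) (πhat : Ω → A → ℝ)
    (hu : ∀ a ω, u a ω ∈ Set.Icc (0 : ℝ) 1)
    (hv : ∀ a ω, v a ω ∈ Set.Icc (0 : ℝ) 1)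
    (hμ1 : ∑ ω, μhat ω = 1)
    (hp0 : 0 < p0) (hmin : ∀ ω, p0 ≤ μhat ω)
    (hD : 0 < D)
    (hη : ∀ a : A, ∃ η : Ω → ℝ, (∀ ω, 0 ≤ η ω) ∧ (∑ ω, η ω = 1) ∧
      ∀ a' : A, a' ≠ a → (∑ ω, η ω * v a' ω) + D ≤ ∑ ω, η ω * v a ω)
    (hε0 : 0 < ε) (hε : ε ≤ p0 ^ 2 * D / 2)
    (hπhat : IsSignalScheme πhat) (hpers : IsPersuasive v μhat πhat) :
    ∃ πt : Ω → A → ℝ, IsSignalScheme πt ∧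
      (∀ μ : Ω → ℝ, (∀ ω, 0 ≤ μ ω) → (∑ ω, μ ω = 1) →
        (∑ ω, |μ ω - μhat ω|) ≤ ε → IsPersuasive v μ πt) ∧
      designerU u μhat πhat - 6 * ε / (p0 ^ 2 * D) ≤ designerU u μhat πt := by
  classical
  have hμ0 : ∀ ω, 0 ≤ μhat ω := fun ω => hp0.le.trans (hmin ω)
  obtain ⟨χ, hχ, hχ_margin⟩ := exists_isSignalScheme_le_obedienceMargin hμ1 hp0 hmin hD.le hη
    (fun a => signalProb_nonneg hμ0 hπhat.1 a) (sum_signalProb hμ1 hπhat)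
  set t := 2 * ε / (p0 ^ 2 * D) with ht
  have ht0 : 0 ≤ t := by positivity
  have ht1 : t ≤ 1 := by rw [ht, div_le_one (by positivity)]; linarith
  have hπt := hπhat.one_sub_smul_add_smul hχ ht0 ht1
  refine ⟨(1 - t) • πhat + t • χ, hπt, fun μ _ _ hball => ?_, ?_⟩
  · refine isPersuasive_of_le_obedienceMargin hv hp0 hmin hball hπt.1 fun a a' ha => ?_
    have hscale : ε / p0 = t * (p0 * D / 2) := by rw [ht]; field_simp
    rw [hscale]
    exact le_obedienceMargin_one_sub_smul_add_smul hμ0 hπhat.1 hχ.1 hpers (by positivity) ht0 ht1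
      (hχ_margin a a' ha)
  · have hU := designerU_le_one (fun a ω => (hu a ω).2) hμ0 hμ1 hπhat
    have hUχ := designerU_nonneg (fun a ω => (hu a ω).1) hμ0 hχ.1
    have ht6 : t ≤ 6 * ε / (p0 ^ 2 * D) := by rw [ht]; gcongr; norm_num
    rw [designerU_smul_add_smul]
    nlinarith

/-- Robustification, first two claims of Lemma 1:
any signaling scheme persuasive for the estimate `μ̂` can be converted into a scheme
that is persuasive for all priors within `ℓ₁`-distance `ε` of `μ̂` and loses at most
`6ε/(p0²D)` of the designer's utility at `μ̂`. -/
theorem robustification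
    {Ω A : Type*} [Fintype Ω] [Fintype A]
    (u v : A → Ω → ℝ) (μhat : Ω → ℝ) (p0 D ε : ℝ) (πhat : Ω → A → ℝ)
    (hu : ∀ a ω, u a ω ∈ Set.Icc (0 : ℝ) 1)
    (hv : ∀ a ω, v a ω ∈ Set.Icc (0 : ℝ) 1)
    (hμ0 : ∀ ω, 0 ≤ μhat ω) (hμ1 : ∑ ω, μhat ω = 1)
    (hp0 : 0 < p0) (hmin : ∀ ω, p0 ≤ μhat ω)
    (hD : 0 < D)
    (hη : ∀ a : A, ∃ η : Ω → ℝ, (∀ ω, 0 ≤ η ω) ∧ (∑ ω, η ω = 1) ∧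
      ∀ a' : A, a' ≠ a → (∑ ω, η ω * v a' ω) + D ≤ ∑ ω, η ω * v a ω)
    (hε0 : 0 < ε) (hε : ε ≤ p0 ^ 2 * D / 2)
    (hπhat : IsSignalScheme πhat) (hpers : IsPersuasive v μhat πhat) :
    ∃ πt : Ω → A → ℝ, IsSignalScheme πt ∧
      (∀ μ : Ω → ℝ, (∀ ω, 0 ≤ μ ω) → (∑ ω, μ ω = 1) →
        (∑ ω, |μ ω - μhat ω|) ≤ ε → IsPersuasive v μ πt) ∧
      designerU u μhat πhat - 6 * ε / (p0 ^ 2 * D) ≤ designerU u μhat πt :=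
  robustification_general u v μhat p0 D ε πhat hu hv hμ1 hp0 hmin hD hη hε0 hε hπhat hpers
end

section
/- Let ω1, ω2 be two states with prior probabilities μ1, μ2 > 0, and let a1 ≠ ã be two actions whose receiver utilities lie in [0,1] and satisfy v(a1,ω1) − v(ã,ω1) ≥ G for some G > 0. Suppose the real numbers ℓ, r ≥ 0 and ε > 0 satisfy: (i) μ1·(v(a1,ω1) − v(ã,ω1)) + μ2·ℓ·(v(a1,ω2) − v(ã,ω2)) ≥ 0; (ii) μ1·(v(a1,ω1) − v(ã,ω1)) + μ2·r·(v(a1,ω2) − v(ã,ω2)) ≤ 0; and (iii) r − ℓ ≤ εG. Then ρ̂ := ℓ·(v(ã,ω2) − v(a1,ω2))/(v(a1,ω1) − v(ã,ω1)) satisfies ρ̂ ≤ μ1/μ2 ≤ ρ̂ + ε. -/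
/-! Write `d₁ = v(a1,ω1) − v(ã,ω1) ≥ G` and `d₂ = v(ã,ω2) − v(a1,ω2)`. Dividing the two
preference inequalities by `μ2 d₁` brackets `μ1/μ2` between `ℓ t` and `r t`, where
`t = d₂/d₁`. Utilities lie in `[0,1]`, so `d₂ ≤ 1` and `t ≤ 1/G`; hence the bracket has width
`(r − ℓ) t ≤ ε G / G = ε`. -/

section RatioBracket

variable {μ1 μ2 d₁ d₂ : ℝ}

theorem mul_div_le_div_of_mul_le {ℓ : ℝ} (hμ2 : 0 < μ2) (hd₁ : 0 < d₁)
    (h : μ2 * ℓ * d₂ ≤ μ1 * d₁) : ℓ * (d₂ / d₁) ≤ μ1 / μ2 := by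
  rw [le_div_iff₀ hμ2, ← mul_le_mul_iff_of_pos_right hd₁]
  calc ℓ * (d₂ / d₁) * μ2 * d₁ = μ2 * ℓ * d₂ := by field_simp
    _ ≤ μ1 * d₁ := h

theorem div_le_mul_div_of_le_mul {r : ℝ} (hμ2 : 0 < μ2) (hd₁ : 0 < d₁)
    (h : μ1 * d₁ ≤ μ2 * r * d₂) : μ1 / μ2 ≤ r * (d₂ / d₁) := by
  rw [div_le_iff₀ hμ2, ← mul_le_mul_iff_of_pos_right hd₁]
  calc μ1 * d₁ ≤ μ2 * r * d₂ := h
    _ = r * (d₂ / d₁) * μ2 * d₁ := by field_simp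

theorem nonneg_of_pos_le_mul_mul {r : ℝ} (hμ2 : 0 ≤ μ2) (hr : 0 ≤ r)
    (hpos : 0 < μ1 * d₁) (h : μ1 * d₁ ≤ μ2 * r * d₂) : 0 ≤ d₂ := by
  by_contra! hd₂
  have : μ2 * r * d₂ ≤ 0 := mul_nonpos_of_nonneg_of_nonpos (mul_nonneg hμ2 hr) hd₂.le
  linarith

end RatioBracket

theorem mul_div_le_mul_div_add {d₁ d₂ G ε ℓ r : ℝ} (hd₁ : 0 < d₁) (hd₂ : 0 ≤ d₂)
    (hGd : G * d₂ ≤ d₁) (hε : 0 ≤ ε) (hclose : r - ℓ ≤ ε * G) :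
    r * (d₂ / d₁) ≤ ℓ * (d₂ / d₁) + ε := by
  have ht : 0 ≤ d₂ / d₁ := div_nonneg hd₂ hd₁.le
  have hGt : G * (d₂ / d₁) ≤ 1 := by
    rwa [← mul_div_assoc, div_le_one hd₁]
  calc r * (d₂ / d₁) = ℓ * (d₂ / d₁) + (r - ℓ) * (d₂ / d₁) := by ring
    _ ≤ ℓ * (d₂ / d₁) + ε * G * (d₂ / d₁) := by gcongr
    _ = ℓ * (d₂ / d₁) + ε * (G * (d₂ / d₁)) := by ring
    _ ≤ ℓ * (d₂ / d₁) + ε * 1 := by gcongr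
    _ = ℓ * (d₂ / d₁) + ε := by ring

theorem binary_search_ratio_estimate_general
    {Ω A : Type*} (ω1 ω2 : Ω) (a1 atilde : A) (v : A → Ω → ℝ)
    (μ1 μ2 G ε ℓ r : ℝ)
    (hμ1 : 0 < μ1) (hμ2 : 0 < μ2)
    (hv : ∀ a ω, v a ω ∈ Set.Icc (0 : ℝ) 1)
    (hG : 0 < G) (hgap : G ≤ v a1 ω1 - v atilde ω1)
    (hr : 0 ≤ r) (hε : 0 < ε)
    (hpref1 : 0 ≤ μ1 * (v a1 ω1 - v atilde ω1) + μ2 * ℓ * (v a1 ω2 - v atilde ω2))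
    (hpref2 : μ1 * (v a1 ω1 - v atilde ω1) + μ2 * r * (v a1 ω2 - v atilde ω2) ≤ 0)
    (hclose : r - ℓ ≤ ε * G) :
    ℓ * ((v atilde ω2 - v a1 ω2) / (v a1 ω1 - v atilde ω1)) ≤ μ1 / μ2 ∧
    μ1 / μ2 ≤ ℓ * ((v atilde ω2 - v a1 ω2) / (v a1 ω1 - v atilde ω1)) + ε := by
  have hd₁ : 0 < v a1 ω1 - v atilde ω1 := hG.trans_le hgap
  have hlow : μ2 * ℓ * (v atilde ω2 - v a1 ω2) ≤ μ1 * (v a1 ω1 - v atilde ω1) := by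
    linear_combination hpref1
  have hup : μ1 * (v a1 ω1 - v atilde ω1) ≤ μ2 * r * (v atilde ω2 - v a1 ω2) := by
    linear_combination hpref2
  have hd₂ := nonneg_of_pos_le_mul_mul hμ2.le hr (mul_pos hμ1 hd₁) hup
  have hd₂_le : v atilde ω2 - v a1 ω2 ≤ 1 := by
    linarith [(hv atilde ω2).2, (hv a1 ω2).1]
  have hGd : G * (v atilde ω2 - v a1 ω2) ≤ v a1 ω1 - v atilde ω1 :=
    (mul_le_of_le_one_right hG.le hd₂_le).trans hgap
  exact ⟨mul_div_le_div_of_mul_le hμ2 hd₁ hlow,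
    (div_le_mul_div_of_le_mul hμ2 hd₁ hup).trans
      (mul_div_le_mul_div_add hd₁ hd₂ hGd hε.le hclose)⟩

/-- correctness of the binary-search output, Lemma 2:
if the receiver weakly prefers `a1` at likelihood ratio `ℓ`, weakly prefers `ã` at
likelihood ratio `r`, and `r − ℓ ≤ εG`, then
`ρ̂ = ℓ·(v(ã,ω2) − v(a1,ω2))/(v(a1,ω1) − v(ã,ω1))` satisfies
`ρ̂ ≤ μ1/μ2 ≤ ρ̂ + ε`. -/
theorem binary_search_ratio_estimate
    {Ω A : Type*} (ω1 ω2 : Ω) (a1 atilde : A) (v : A → Ω → ℝ)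
    (μ1 μ2 G ε ℓ r : ℝ)
    (hμ1 : 0 < μ1) (hμ2 : 0 < μ2)
    (hane : a1 ≠ atilde)
    (hv : ∀ a ω, v a ω ∈ Set.Icc (0 : ℝ) 1)
    (hG : 0 < G) (hgap : G ≤ v a1 ω1 - v atilde ω1)
    (hℓ : 0 ≤ ℓ) (hr : 0 ≤ r) (hε : 0 < ε)
    (hpref1 : 0 ≤ μ1 * (v a1 ω1 - v atilde ω1) + μ2 * ℓ * (v a1 ω2 - v atilde ω2))
    (hpref2 : μ1 * (v a1 ω1 - v atilde ω1) + μ2 * r * (v a1 ω2 - v atilde ω2) ≤ 0)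
    (hclose : r - ℓ ≤ ε * G) :
    ℓ * ((v atilde ω2 - v a1 ω2) / (v a1 ω1 - v atilde ω1)) ≤ μ1 / μ2 ∧
    μ1 / μ2 ≤ ℓ * ((v atilde ω2 - v a1 ω2) / (v a1 ω1 - v atilde ω1)) + ε :=
  binary_search_ratio_estimate_general ω1 ω2 a1 atilde v μ1 μ2 G ε ℓ r hμ1 hμ2 hv hG hgap hr hε
    hpref1 hpref2 hclose
end

section
/- Let Ω = {ω1, …, ωn} with n ≥ 1 and let μ* ∈ Δ(Ω) satisfy min_{ω∈Ω} μ*(ω) ≥ p0 > 0. Suppose for each i = 2, …, n the number ρ̂_{i1} ≥ 0 satisfies |ρ̂_{i1} − μ*(ωi)/μ*(ω1)| ≤ ε'. Define μ̂(ω1) = 1/(1 + Σ_{i=2}^{n} ρ̂_{i1}) and μ̂(ωi) = ρ̂_{i1}·μ̂(ω1) for i = 2, …, n. Then ‖μ̂ − μ*‖₁ = Σ_{i=1}^{n} |μ̂(ωi) − μ*(ωi)| ≤ 3nε'/p0. -/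
open Finset

/-!
Both `μ*` and `μ̂` are normalizations of vectors with first coordinate `1`: `μ̂` of
`x = (1, ρ̂₂₁, …, ρ̂ₙ₁)` and `μ*` of `y = μ* / μ*(ω₁)`. These two vectors are `nε'`-close in
`ℓ¹`, and normalizing is Lipschitz in `ℓ¹` with constant `2 / ∑ x ≤ 2`, so
`‖μ̂ - μ*‖₁ ≤ 2nε' ≤ 3nε'/p0`.
-/

lemma mul_abs_one_div_sub_one_div_le {X Y : ℝ} (hX : 0 < X) (hY : 0 ≤ Y) :
    Y * |1 / X - 1 / Y| ≤ |Y - X| / X := by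
  rcases hY.eq_or_lt with rfl | hY
  · rw [zero_mul]
    positivity
  · rw [div_sub_div _ _ hX.ne' hY.ne', abs_div, abs_of_pos (mul_pos hX hY)]
    apply le_of_eq
    field_simp

lemma sum_abs_div_sum_sub_div_sum_le {ι : Type*} [Fintype ι] (x y : ι → ℝ)
    (hX : 0 < ∑ i, x i) (hy : ∀ i, 0 ≤ y i) :
    ∑ i, |x i / ∑ j, x j - y i / ∑ j, y j| ≤ 2 * (∑ i, |x i - y i|) / ∑ i, x i := by
  set X := ∑ i, x i
  set Y := ∑ i, y i
  have hterm (i : ι) : |x i / X - y i / Y| ≤ |x i - y i| / X + y i * |1 / X - 1 / Y| := by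
    have hsplit : x i / X - y i / Y = (x i - y i) / X + y i * (1 / X - 1 / Y) := by ring
    rw [hsplit]
    refine (abs_add_le _ _).trans_eq ?_
    rw [abs_div, abs_of_pos hX, abs_mul, abs_of_nonneg (hy i)]
  have hYX : |Y - X| ≤ ∑ i, |x i - y i| := by
    rw [abs_sub_comm, ← sum_sub_distrib]
    exact abs_sum_le_sum_abs _ _
  calc ∑ i, |x i / X - y i / Y|
      ≤ ∑ i, (|x i - y i| / X + y i * |1 / X - 1 / Y|) := sum_le_sum fun i _ => hterm i
    _ = (∑ i, |x i - y i|) / X + Y * |1 / X - 1 / Y| := by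
      rw [sum_add_distrib, ← sum_div, ← sum_mul]
    _ ≤ (∑ i, |x i - y i|) / X + |Y - X| / X := by
      gcongr
      exact mul_abs_one_div_sub_one_div_le hX (sum_nonneg fun i _ => hy i)
    _ ≤ 2 * (∑ i, |x i - y i|) / X := by
      rw [two_mul, add_div]
      gcongr

lemma eq_div_sum_div_of_sum_eq_one {ι : Type*} [Fintype ι] {μ : ι → ℝ} (hμ : ∑ i, μ i = 1)
    {c : ℝ} (hc : c ≠ 0) (i : ι) : μ i = μ i / c / ∑ j, μ j / c := by
  rw [← sum_div, hμ]
  field_simp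

lemma eq_update_div_sum_of_ratios {ι : Type*} [Fintype ι] [DecidableEq ι] {i₀ : ι}
    {ρ μ : ι → ℝ} (h₀ : μ i₀ = 1 / (1 + ∑ i ∈ univ.erase i₀, ρ i))
    (h : ∀ i, i ≠ i₀ → μ i = ρ i * μ i₀) (i : ι) :
    μ i = Function.update ρ i₀ 1 i / ∑ j, Function.update ρ i₀ 1 j := by
  rw [sum_update_of_mem (mem_univ i₀), sdiff_singleton_eq_erase]
  rcases eq_or_ne i i₀ with rfl | hi
  · rw [h₀, Function.update_self]
  · rw [h i hi, h₀, mul_one_div, Function.update_of_ne hi]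

/-- Claim 1, accuracy of the reconstructed prior: if every ratio
`μ*(ωi)/μ*(ω1)` is estimated within `ε'` and the prior estimate `μ̂` is reconstructed
by normalizing the estimated ratios, then `‖μ̂ − μ*‖₁ ≤ 3nε'/p0`.
States are indexed by `Fin n` with `ω1 = 0`. -/
theorem prior_reconstruction_accuracy
    {n : ℕ} [NeZero n]
    (μstar ρ μhat : Fin n → ℝ) (p0 ε' : ℝ)
    (hμ0 : ∀ i, 0 ≤ μstar i) (hμ1 : ∑ i, μstar i = 1)
    (hp0 : 0 < p0) (hmin : ∀ i, p0 ≤ μstar i)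
    (hε' : 0 ≤ ε')
    (hρ0 : ∀ i : Fin n, i ≠ 0 → 0 ≤ ρ i)
    (hρ : ∀ i : Fin n, i ≠ 0 → |ρ i - μstar i / μstar 0| ≤ ε')
    (hhat0 : μhat 0 = 1 / (1 + ∑ i ∈ Finset.univ.erase 0, ρ i))
    (hhat : ∀ i : Fin n, i ≠ 0 → μhat i = ρ i * μhat 0) :
    ∑ i, |μhat i - μstar i| ≤ 3 * n * ε' / p0 := by
  set x := Function.update ρ 0 1 with hx
  set y : Fin n → ℝ := fun i => μstar i / μstar 0
  have hμstar0 : 0 < μstar 0 := hp0.trans_le (hmin 0)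
  have hp0_le_one : p0 ≤ 1 :=
    (hmin 0).trans (hμ1 ▸ single_le_sum (fun i _ => hμ0 i) (mem_univ 0))
  have hxy : ∑ i, |x i - y i| ≤ n * ε' := by
    calc ∑ i, |x i - y i| ≤ ∑ _i : Fin n, ε' := sum_le_sum fun i _ => ?_
      _ = n * ε' := by simp
    rcases eq_or_ne i 0 with rfl | hi
    · simpa [x, y, hμstar0.ne'] using hε'
    · simpa [x, y, hi] using hρ i hi
  have hX : 1 ≤ ∑ i, x i := by
    rw [hx, sum_update_of_mem (mem_univ 0), sdiff_singleton_eq_erase]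
    exact le_add_of_nonneg_right (sum_nonneg fun i hi => hρ0 i (ne_of_mem_erase hi))
  have hnε : 0 ≤ n * ε' := by positivity
  calc ∑ i, |μhat i - μstar i| = ∑ i, |x i / ∑ j, x j - y i / ∑ j, y j| := by
        refine sum_congr rfl fun i _ => ?_
        rw [eq_update_div_sum_of_ratios hhat0 hhat i,
          eq_div_sum_div_of_sum_eq_one hμ1 hμstar0.ne' i]
    _ ≤ 2 * (∑ i, |x i - y i|) / ∑ i, x i :=
        sum_abs_div_sum_sub_div_sum_le x y (by linarith) fun i => div_nonneg (hμ0 i) hμstar0.le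
    _ ≤ 2 * (n * ε') / 1 := by gcongr
    _ ≤ 3 * (n * ε') / p0 := by gcongr; norm_num
    _ = 3 * n * ε' / p0 := by ring
end

section
/- Let Ω be a finite set, μ ∈ Δ(Ω) with μ(ω) > 0 for all ω, I a finite index set, q ∈ Δ(I), and for each i ∈ I let ξ_i ∈ Δ(Ω), such that Σ_{i∈I} q(i)·ξ_i(ω) = μ(ω) for every ω ∈ Ω. Define π(i|ω) = q(i)·ξ_i(ω)/μ(ω). Then: (i) for each ω, π(·|ω) is a probability distribution on I; (ii) the unconditional probability of each signal i equals Σ_{ω∈Ω} μ(ω)π(i|ω) = q(i); and (iii) for every i with q(i) > 0, the Bayesian posterior induced by signal i under prior μ and scheme π, namely ω ↦ μ(ω)π(i|ω)/Σ_{ω'} μ(ω')π(i|ω'), equals ξ_i. -/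
open Finset

/-- splitting lemma / Bayes-plausible decompositions are induced by
signaling schemes: given a full-support prior `μ` decomposed as
`μ = Σ_i q(i)·ξ_i` with `q ∈ Δ(I)` and each `ξ_i ∈ Δ(Ω)`, the scheme
`π(i|ω) = q(i)ξ_i(ω)/μ(ω)` is a valid signaling scheme, each signal `i` has
unconditional probability `q(i)`, and each signal `i` with `q(i) > 0` induces
posterior `ξ_i`. -/
theorem splitting_construction
    {Ω I : Type*} [Fintype Ω] [Fintype I]
    (μ : Ω → ℝ) (q : I → ℝ) (ξ : I → Ω → ℝ) (π : Ω → I → ℝ)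
    (hμ0 : ∀ ω, 0 < μ ω) (hμ1 : ∑ ω, μ ω = 1)
    (hq0 : ∀ i, 0 ≤ q i) (hq1 : ∑ i, q i = 1)
    (hξ0 : ∀ i ω, 0 ≤ ξ i ω) (hξ1 : ∀ i, ∑ ω, ξ i ω = 1)
    (hdecomp : ∀ ω, ∑ i, q i * ξ i ω = μ ω)
    (hπ : ∀ ω i, π ω i = q i * ξ i ω / μ ω) :
    (∀ ω, (∀ i, 0 ≤ π ω i) ∧ ∑ i, π ω i = 1) ∧
    (∀ i, ∑ ω, μ ω * π ω i = q i) ∧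
    (∀ i, 0 < q i → ∀ ω, μ ω * π ω i / (∑ ω', μ ω' * π ω' i) = ξ i ω) := by
  have key : ∀ ω i, μ ω * π ω i = q i * ξ i ω := by
    intro ω i
    rw [hπ]
    rw [mul_div_assoc', mul_comm, mul_div_assoc, div_self (hμ0 ω).ne', mul_one]
  have huncond : ∀ i, ∑ ω, μ ω * π ω i = q i := by
    intro i
    simp only [key]
    rw [← Finset.mul_sum, hξ1, mul_one]
  refine ⟨fun ω => ⟨fun i => ?_, ?_⟩, huncond, fun i hqi ω => ?_⟩
  · rw [hπ]
    exact div_nonneg (mul_nonneg (hq0 i) (hξ0 i ω)) (hμ0 ω).le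
  · have : ∑ i, π ω i = (∑ i, q i * ξ i ω) / μ ω := by
      rw [Finset.sum_div]; exact Finset.sum_congr rfl fun i _ => hπ ω i
    rw [this, hdecomp, div_self (hμ0 ω).ne']
  · rw [huncond i, key, mul_comm, mul_div_assoc, div_self hqi.ne', mul_one]
end

section
/- In the binary-action setting, the direct signaling scheme π* defined by π*(1|ω) = 1 for ω < ω†, π*(1|ω†) = (−Σ_{j=1}^{ω†−1} μ(j)(v(0,j) − v(1,j)))/(μ(ω†)(v(0,ω†) − v(1,ω†))), and π*(1|ω) = 0 for ω > ω† (with π*(0|ω) = 1 − π*(1|ω)) is an optimal solution of the linear program: maximize Σ_ω μ(ω)(π(1|ω)u(1,ω) + π(0|ω)u(0,ω)) over all π with 0 ≤ π(1|ω) = 1 − π(0|ω) ≤ 1, subject to Σ_ω μ(ω)π(1|ω)(v(1,ω) − v(0,ω)) ≥ 0 and Σ_ω μ(ω)π(0|ω)(v(0,ω) − v(1,ω)) ≥ 0. In particular, π* is feasible for this program and attains its maximum. -/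
/-!
Write `c ω = μ(ω)(u(1,ω) − u(0,ω))` and `d ω = μ(ω)(v(0,ω) − v(1,ω))`. Up to a constant the
designer maximises `∑ x c` subject to `∑ x d ≤ 0` and `0 ≤ x ≤ 1` (the other constraint holds
automatically for `π*`, since the prior favours action 0). This is a fractional knapsack: the
multiplier `λ = c(ω†)/d(ω†)` makes `c − λ d` nonnegative before `ω†`, zero at `ω†` and nonpositive
after it, which is exactly where `π*` takes the values `1`, fractional, `0`; since `π*` makes the
constraint tight, weak duality gives optimality.
-/

open Finset

section ThresholdScheme

variable {ι : Type*} [Fintype ι] [LinearOrder ι]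

/-- Take everything strictly below `k`, and the fraction of `k` that brings `∑ x w` back to `0`. -/
noncomputable def thresholdScheme (w : ι → ℝ) (k : ι) (i : ι) : ℝ :=
  if i < k then 1
  else if i = k then -(∑ j ∈ univ.filter (· < k), w j) / w k
  else 0

theorem sum_filter_le_eq_add_sum_filter_lt (w : ι → ℝ) (k : ι) :
    ∑ j ∈ univ.filter (· ≤ k), w j = w k + ∑ j ∈ univ.filter (· < k), w j := by
  have : univ.filter (· ≤ k) = insert k (univ.filter (· < k)) := by
    ext j
    simp [le_iff_lt_or_eq, or_comm]
  rw [this, sum_insert (by simp)]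

theorem sum_filter_lt_nonpos_of_forall_lt {w : ι → ℝ} {k : ι}
    (h : ∀ i < k, ∑ j ∈ univ.filter (· ≤ i), w j ≤ 0) :
    ∑ j ∈ univ.filter (· < k), w j ≤ 0 := by
  rcases (univ.filter (· < k)).eq_empty_or_nonempty with hempty | hne
  · simp [hempty]
  · set m := (univ.filter (· < k)).max' hne
    have hm : m < k := (mem_filter.mp (max'_mem _ hne)).2
    have hseg : univ.filter (· < k) = univ.filter (· ≤ m) := by
      ext j
      simp only [mem_filter, mem_univ, true_and]
      exact ⟨fun hj => le_max' _ j (by simpa using hj), fun hj => hj.trans_lt hm⟩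
    rw [hseg]
    exact h m hm

variable {w : ι → ℝ} {k : ι}

theorem thresholdScheme_mem_Icc (hbelow : ∑ j ∈ univ.filter (· < k), w j ≤ 0)
    (hupto : 0 < ∑ j ∈ univ.filter (· ≤ k), w j) (i : ι) :
    thresholdScheme w k i ∈ Set.Icc (0 : ℝ) 1 := by
  rw [sum_filter_le_eq_add_sum_filter_lt] at hupto
  have hwk : 0 < w k := by linarith
  unfold thresholdScheme
  split_ifs
  · exact ⟨zero_le_one, le_rfl⟩
  · exact ⟨div_nonneg (neg_nonneg.mpr hbelow) hwk.le, (div_le_one hwk).mpr (by linarith)⟩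
  · exact ⟨le_rfl, zero_le_one⟩

theorem sum_thresholdScheme_mul_eq_zero (hwk : w k ≠ 0) :
    ∑ i, thresholdScheme w k i * w i = 0 := by
  rw [← sum_filter_add_sum_filter_not univ (· < k)]
  have hbelow : ∑ i ∈ univ.filter (· < k), thresholdScheme w k i * w i =
      ∑ i ∈ univ.filter (· < k), w i :=
    sum_congr rfl fun i hi => by simp [thresholdScheme, (mem_filter.mp hi).2]
  have hrest : ∑ i ∈ univ.filter (¬ · < k), thresholdScheme w k i * w i =
      thresholdScheme w k k * w k := by
    refine sum_eq_single_of_mem k (by simp) fun i hi hik => ?_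
    simp [thresholdScheme, (mem_filter.mp hi).2, hik]
  rw [hbelow, hrest]
  simp only [thresholdScheme, lt_irrefl, if_false, if_true, div_mul_cancel₀ _ hwk]
  ring

theorem mul_le_thresholdScheme_mul (w : ι → ℝ) {x g : ι → ℝ}
    (hx : ∀ i, x i ∈ Set.Icc (0 : ℝ) 1) (hlt : ∀ i < k, 0 ≤ g i) (hk : g k = 0)
    (hgt : ∀ i, k < i → g i ≤ 0) (i : ι) :
    x i * g i ≤ thresholdScheme w k i * g i := by
  rcases lt_trichotomy i k with h | rfl | h
  · simpa [thresholdScheme, h] using mul_le_of_le_one_left (hlt i h) (hx i).2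
  · simp [hk]
  · simpa [thresholdScheme, h.not_gt, h.ne'] using mul_nonpos_of_nonneg_of_nonpos (hx i).1 (hgt i h)

end ThresholdScheme

theorem sum_mul_le_of_lagrangian {ι : Type*} [Fintype ι] {c d x y : ι → ℝ} {lam : ℝ}
    (hlam : 0 ≤ lam) (hx : ∑ i, x i * d i ≤ 0) (hy : ∑ i, y i * d i = 0)
    (hterm : ∀ i, x i * (c i - lam * d i) ≤ y i * (c i - lam * d i)) :
    ∑ i, x i * c i ≤ ∑ i, y i * c i := by
  have hsplit : ∀ z : ι → ℝ,
      ∑ i, z i * (c i - lam * d i) = ∑ i, z i * c i - lam * ∑ i, z i * d i := by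
    intro z
    rw [mul_sum, ← sum_sub_distrib]
    exact sum_congr rfl fun _ _ => by ring
  have hle := sum_le_sum fun i (_ : i ∈ univ) => hterm i
  rw [hsplit, hsplit, hy] at hle
  linarith [mul_nonpos_of_nonneg_of_nonpos hlam hx]

section RatioOrder

variable {ι : Type*} [LinearOrder ι] {c d : ι → ℝ} {k : ι}

theorem sub_div_mul_nonneg_of_lt (hc : ∀ i, 0 < c i) (hdk : 0 < d k)
    (hratio : ∀ i j, 0 < d i → i ≤ j → c j / d j ≤ c i / d i) {i : ι} (hik : i < k) :
    0 ≤ c i - c k / d k * d i := by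
  rcases le_or_gt (d i) 0 with hdi | hdi
  · nlinarith [hc i, div_pos (hc k) hdk]
  · have := (le_div_iff₀ hdi).mp (hratio i k hdi hik.le)
    linarith

theorem sub_div_mul_nonpos_of_gt (hdk : 0 < d k)
    (hpos : ∀ i j, 0 < d i → i ≤ j → 0 < d j)
    (hratio : ∀ i j, 0 < d i → i ≤ j → c j / d j ≤ c i / d i) {i : ι} (hki : k < i) :
    c i - c k / d k * d i ≤ 0 := by
  have hdi := hpos k i hdk hki.le
  have := (div_le_iff₀ hdi).mp (hratio k i hdk hki.le)
  linarith

end RatioOrder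

theorem sum_mul_le_sum_thresholdScheme_mul {ι : Type*} [Fintype ι] [LinearOrder ι]
    {c d x : ι → ℝ} {k : ι} (hc : ∀ i, 0 < c i)
    (hpos : ∀ i j, 0 < d i → i ≤ j → 0 < d j)
    (hratio : ∀ i j, 0 < d i → i ≤ j → c j / d j ≤ c i / d i)
    (hbelow : ∑ j ∈ univ.filter (· < k), d j ≤ 0) (hupto : 0 < ∑ j ∈ univ.filter (· ≤ k), d j)
    (hx : ∀ i, x i ∈ Set.Icc (0 : ℝ) 1) (hxd : ∑ i, x i * d i ≤ 0) :
    ∑ i, x i * c i ≤ ∑ i, thresholdScheme d k i * c i := by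
  rw [sum_filter_le_eq_add_sum_filter_lt] at hupto
  have hdk : 0 < d k := by linarith
  refine sum_mul_le_of_lagrangian (div_pos (hc k) hdk).le hxd
    (sum_thresholdScheme_mul_eq_zero hdk.ne') fun i => mul_le_thresholdScheme_mul d hx
      (fun i hi => sub_div_mul_nonneg_of_lt hc hdk hratio hi) ?_
      (fun i hi => sub_div_mul_nonpos_of_gt hdk hpos hratio hi) i
  rw [div_mul_cancel₀ _ hdk.ne', sub_self]

theorem binary_action_optimal_scheme_general
    {n : ℕ} (μ : Fin n → ℝ) (u v : Fin 2 → Fin n → ℝ)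
    (nminus : ℕ) (ωdag : Fin n) (xstar : Fin n → ℝ)
    (hμ0 : ∀ ω, 0 < μ ω)
    (hupref : ∀ ω, u 0 ω < u 1 ω)
    (hprior0 : 0 < ∑ ω, μ ω * (v 0 ω - v 1 ω))
    (horder1 : ∀ ω : Fin n, v 0 ω - v 1 ω ≤ 0 ↔ (ω : ℕ) < nminus)
    (horder2 : ∀ ωi ωj : Fin n, nminus ≤ (ωi : ℕ) → ωi ≤ ωj →
      (u 1 ωj - u 0 ωj) / (v 0 ωj - v 1 ωj) ≤ (u 1 ωi - u 0 ωi) / (v 0 ωi - v 1 ωi))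
    (hωdag1 : 0 < ∑ j ∈ Finset.univ.filter (· ≤ ωdag), μ j * (v 0 j - v 1 j))
    (hωdag2 : ∀ ω < ωdag, (∑ j ∈ Finset.univ.filter (· ≤ ω), μ j * (v 0 j - v 1 j)) ≤ 0)
    (hxstar : ∀ ω, xstar ω =
      if ω < ωdag then 1
      else if ω = ωdag then
        (-(∑ j ∈ Finset.univ.filter (· < ωdag), μ j * (v 0 j - v 1 j))) /
          (μ ωdag * (v 0 ωdag - v 1 ωdag))
      else 0) :
    ((∀ ω, xstar ω ∈ Set.Icc (0 : ℝ) 1) ∧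
      0 ≤ ∑ ω, μ ω * xstar ω * (v 1 ω - v 0 ω) ∧
      0 ≤ ∑ ω, μ ω * (1 - xstar ω) * (v 0 ω - v 1 ω)) ∧
    (∀ x : Fin n → ℝ, (∀ ω, x ω ∈ Set.Icc (0 : ℝ) 1) →
      0 ≤ (∑ ω, μ ω * x ω * (v 1 ω - v 0 ω)) →
      0 ≤ (∑ ω, μ ω * (1 - x ω) * (v 0 ω - v 1 ω)) →
      (∑ ω, μ ω * (x ω * u 1 ω + (1 - x ω) * u 0 ω)) ≤
        ∑ ω, μ ω * (xstar ω * u 1 ω + (1 - xstar ω) * u 0 ω)) := by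
  set c : Fin n → ℝ := fun ω => μ ω * (u 1 ω - u 0 ω)
  set d : Fin n → ℝ := fun ω => μ ω * (v 0 ω - v 1 ω)
  have hxstar_eq : xstar = thresholdScheme d ωdag := funext hxstar
  have hbelow := sum_filter_lt_nonpos_of_forall_lt hωdag2
  have hdk : 0 < d ωdag := by
    rw [sum_filter_le_eq_add_sum_filter_lt] at hωdag1
    linarith
  have hxstar_d : ∑ ω, xstar ω * d ω = 0 := hxstar_eq ▸ sum_thresholdScheme_mul_eq_zero hdk.ne'
  have hd_pos_iff (ω : Fin n) : 0 < d ω ↔ nminus ≤ (ω : ℕ) := by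
    rw [mul_pos_iff_of_pos_left (hμ0 ω), ← not_le, horder1, not_lt]
  have hratio (ω : Fin n) : c ω / d ω = (u 1 ω - u 0 ω) / (v 0 ω - v 1 ω) :=
    mul_div_mul_left _ _ (hμ0 ω).ne'
  have hobey (y : Fin n → ℝ) : ∑ ω, μ ω * y ω * (v 1 ω - v 0 ω) = -∑ ω, y ω * d ω := by
    rw [← sum_neg_distrib]
    exact sum_congr rfl fun _ _ => by ring
  have hdeviate (y : Fin n → ℝ) :
      ∑ ω, μ ω * (1 - y ω) * (v 0 ω - v 1 ω) = ∑ ω, d ω - ∑ ω, y ω * d ω := by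
    rw [← sum_sub_distrib]
    exact sum_congr rfl fun _ _ => by ring
  have hvalue (y : Fin n → ℝ) :
      ∑ ω, μ ω * (y ω * u 1 ω + (1 - y ω) * u 0 ω) = ∑ ω, y ω * c ω + ∑ ω, μ ω * u 0 ω := by
    rw [← sum_add_distrib]
    exact sum_congr rfl fun _ _ => by ring
  refine ⟨⟨hxstar_eq ▸ thresholdScheme_mem_Icc hbelow hωdag1, ?_, ?_⟩, ?_⟩
  · rw [hobey, hxstar_d, neg_zero]
  · rw [hdeviate, hxstar_d, sub_zero]
    exact hprior0.le
  · intro x hx hx_obey _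
    rw [hvalue, hvalue, add_le_add_iff_right, hxstar_eq]
    refine sum_mul_le_sum_thresholdScheme_mul (fun ω => mul_pos (hμ0 ω) (sub_pos.mpr (hupref ω)))
      (fun i j hi hij => (hd_pos_iff j).mpr (((hd_pos_iff i).mp hi).trans hij))
      (fun i j hi hij => ?_) hbelow hωdag1 hx (by linarith [hobey x])
    rw [hratio, hratio]
    exact horder2 i j ((hd_pos_iff i).mp hi) hij

/-- Lemma 4, optimal signaling scheme in the binary-action case:
the greedy/threshold scheme `π*` (represented by `xstar ω = π*(1|ω)`) is feasible for
the persuasion linear program and attains its maximum.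
States `{1,…,n}` are indexed by `Fin n` (`ω` corresponds to state `ω+1`), actions by
`Fin 2`; `nminus` is the number of states with `v(0,ω) − v(1,ω) ≤ 0` and `ωdag` is the
threshold state. -/
theorem binary_action_optimal_scheme
    {n : ℕ} (μ : Fin n → ℝ) (u v : Fin 2 → Fin n → ℝ)
    (nminus : ℕ) (ωdag : Fin n) (xstar : Fin n → ℝ)
    (hμ0 : ∀ ω, 0 < μ ω) (hμ1 : ∑ ω, μ ω = 1)
    (hu : ∀ a ω, u a ω ∈ Set.Icc (0 : ℝ) 1)
    (hv : ∀ a ω, v a ω ∈ Set.Icc (0 : ℝ) 1)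
    (hupref : ∀ ω, u 0 ω < u 1 ω)
    (hprior0 : 0 < ∑ ω, μ ω * (v 0 ω - v 1 ω))
    (hnminus : nminus ≤ n)
    (horder1 : ∀ ω : Fin n, v 0 ω - v 1 ω ≤ 0 ↔ (ω : ℕ) < nminus)
    (horder2 : ∀ ωi ωj : Fin n, nminus ≤ (ωi : ℕ) → ωi ≤ ωj →
      (u 1 ωj - u 0 ωj) / (v 0 ωj - v 1 ωj) ≤ (u 1 ωi - u 0 ωi) / (v 0 ωi - v 1 ωi))
    (hωdag1 : 0 < ∑ j ∈ Finset.univ.filter (· ≤ ωdag), μ j * (v 0 j - v 1 j))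
    (hωdag2 : ∀ ω < ωdag, (∑ j ∈ Finset.univ.filter (· ≤ ω), μ j * (v 0 j - v 1 j)) ≤ 0)
    (hxstar : ∀ ω, xstar ω =
      if ω < ωdag then 1
      else if ω = ωdag then
        (-(∑ j ∈ Finset.univ.filter (· < ωdag), μ j * (v 0 j - v 1 j))) /
          (μ ωdag * (v 0 ωdag - v 1 ωdag))
      else 0) :
    ((∀ ω, xstar ω ∈ Set.Icc (0 : ℝ) 1) ∧
      0 ≤ ∑ ω, μ ω * xstar ω * (v 1 ω - v 0 ω) ∧
      0 ≤ ∑ ω, μ ω * (1 - xstar ω) * (v 0 ω - v 1 ω)) ∧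
    (∀ x : Fin n → ℝ, (∀ ω, x ω ∈ Set.Icc (0 : ℝ) 1) →
      0 ≤ (∑ ω, μ ω * x ω * (v 1 ω - v 0 ω)) →
      0 ≤ (∑ ω, μ ω * (1 - x ω) * (v 0 ω - v 1 ω)) →
      (∑ ω, μ ω * (x ω * u 1 ω + (1 - x ω) * u 0 ω)) ≤
        ∑ ω, μ ω * (xstar ω * u 1 ω + (1 - xstar ω) * u 0 ω)) :=
  binary_action_optimal_scheme_general μ u v nminus ωdag xstar hμ0 hupref hprior0 horder1 horder2
    hωdag1 hωdag2 hxstar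
end

section
/- In the binary-action setting, let M* = Σ_{ω=1}^{n} π*(1|ω), and for M ∈ [0, n] let π^M be the signaling scheme with persuasion strength M. Then: (i) for every M ∈ [0,n], Σ_ω μ(ω)π^M(0|ω)(v(0,ω) − v(1,ω)) ≥ 0 (π^M is persuasive for action 0); (ii) Σ_ω μ(ω)π^M(1|ω)(v(1,ω) − v(0,ω)) ≥ 0 holds if and only if M ≤ M* (π^M is persuasive for action 1 iff M ≤ M*); and (iii) for every M ≤ M*, Σ_ω μ(ω) Σ_{a∈{0,1}} (π*(a|ω) − π^M(a|ω)) u(a,ω) ≤ M* − M. -/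
open Finset

private lemma sum_step' {n : ℕ} (k : ℕ) (t : ℝ) (f : Fin n → ℝ)
    (hf : ∀ ω : Fin n, f ω = if (ω : ℕ) < k then 1 else if (ω : ℕ) = k then t else 0) :
    ∑ ω, f ω = (min k n : ℕ) + (if k < n then t else 0) := by
  have h1 : ∀ ω : Fin n, f ω =
      (if (ω : ℕ) < k then (1:ℝ) else 0) + (if (ω : ℕ) = k then t else 0) := by
    intro ω
    rw [hf]
    rcases lt_trichotomy (ω : ℕ) k with h | h | h
    · simp [h, Nat.ne_of_lt h]
    · simp [h]
    · simp [Nat.lt_asymm h, (Nat.ne_of_lt h).symm]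
  rw [Finset.sum_congr rfl (fun ω _ => h1 ω), Finset.sum_add_distrib]
  congr 1
  · rw [Fin.sum_univ_eq_sum_range (fun i => if i < k then (1:ℝ) else 0) n]
    rw [Finset.sum_boole]
    have : (range n).filter (· < k) = range (min k n) := by
      ext i; simp; omega
    rw [this]
    simp
  · by_cases hk : k < n
    · have : ∀ ω : Fin n, ((ω : ℕ) = k) = (ω = (⟨k, hk⟩ : Fin n)) := by
        intro ω; simp [Fin.ext_iff]
      simp only [this]
      rw [Finset.sum_ite_eq' Finset.univ (⟨k, hk⟩ : Fin n) (fun _ => t)]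
      simp [hk]
    · rw [Finset.sum_eq_zero, if_neg hk]
      intro ω _
      rw [if_neg]
      omega




/-- Lemma 5, properties of the schemes `π^M` parameterized by persuasion
strength: with `M* = Σ_ω π*(1|ω)` and `π^M` defined by filling states `1,…,⌊M⌋` fully
and state `⌊M⌋+1` with probability `M − ⌊M⌋` (represented here by
`xM M ω = π^M(1|ω)`), we have for every `M ∈ [0,n]`:
(i) `π^M` is persuasive for action 0;
(ii) `π^M` is persuasive for action 1 iff `M ≤ M*`;
(iii) for `M ≤ M*` the utility gap of `π^M` relative to `π*` is at most `M* − M`.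
States `{1,…,n}` are indexed by `Fin n` (`ω` corresponds to state `ω+1`). -/
theorem persuasion_strength_properties
    {n : ℕ} (μ : Fin n → ℝ) (u v : Fin 2 → Fin n → ℝ)
    (nminus : ℕ) (ωdag : Fin n) (xstar : Fin n → ℝ) (xM : ℝ → Fin n → ℝ) (Mstar : ℝ)
    (hμ0 : ∀ ω, 0 < μ ω) (hμ1 : ∑ ω, μ ω = 1)
    (hu : ∀ a ω, u a ω ∈ Set.Icc (0 : ℝ) 1)
    (hv : ∀ a ω, v a ω ∈ Set.Icc (0 : ℝ) 1)
    (hupref : ∀ ω, u 0 ω < u 1 ω)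
    (hprior0 : 0 < ∑ ω, μ ω * (v 0 ω - v 1 ω))
    (hnminus : nminus ≤ n)
    (horder1 : ∀ ω : Fin n, v 0 ω - v 1 ω ≤ 0 ↔ (ω : ℕ) < nminus)
    (horder2 : ∀ ωi ωj : Fin n, nminus ≤ (ωi : ℕ) → ωi ≤ ωj →
      (u 1 ωj - u 0 ωj) / (v 0 ωj - v 1 ωj) ≤ (u 1 ωi - u 0 ωi) / (v 0 ωi - v 1 ωi))
    (hωdag1 : 0 < ∑ j ∈ Finset.univ.filter (· ≤ ωdag), μ j * (v 0 j - v 1 j))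
    (hωdag2 : ∀ ω < ωdag, (∑ j ∈ Finset.univ.filter (· ≤ ω), μ j * (v 0 j - v 1 j)) ≤ 0)
    (hxstar : ∀ ω, xstar ω =
      if ω < ωdag then 1
      else if ω = ωdag then
        (-(∑ j ∈ Finset.univ.filter (· < ωdag), μ j * (v 0 j - v 1 j))) /
          (μ ωdag * (v 0 ωdag - v 1 ωdag))
      else 0)
    (hMstar : Mstar = ∑ ω, xstar ω)
    (hxM : ∀ (M : ℝ) (ω : Fin n), xM M ω =
      if ((ω : ℕ) : ℤ) < ⌊M⌋ then 1
      else if ((ω : ℕ) : ℤ) = ⌊M⌋ then M - ⌊M⌋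
      else 0) :
    ∀ M : ℝ, 0 ≤ M → M ≤ n →
      (0 ≤ ∑ ω, μ ω * (1 - xM M ω) * (v 0 ω - v 1 ω)) ∧
      ((0 ≤ ∑ ω, μ ω * xM M ω * (v 1 ω - v 0 ω)) ↔ M ≤ Mstar) ∧
      (M ≤ Mstar →
        (∑ ω, μ ω * ((xstar ω - xM M ω) * u 1 ω +
          ((1 - xstar ω) - (1 - xM M ω)) * u 0 ω)) ≤ Mstar - M) := by

  have hbd0 : ∀ (M : ℝ) ω, 0 ≤ xM M ω := by
    intro M ω
    rw [hxM]
    have h1 := Int.floor_le M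
    split_ifs <;> linarith
  have hbd1 : ∀ (M : ℝ) ω, xM M ω ≤ 1 := by
    intro M ω
    rw [hxM]
    have h1 := Int.lt_floor_add_one M
    split_ifs <;> linarith
  have hmono : ∀ (M M' : ℝ), M ≤ M' → ∀ ω, xM M ω ≤ xM M' ω := by
    intro M M' h ω
    have hf : (⌊M⌋ : ℤ) ≤ ⌊M'⌋ := Int.floor_le_floor h
    have h1 := Int.floor_le M
    have h2 := Int.lt_floor_add_one M
    rcases lt_trichotomy ((ω : ℕ) : ℤ) ⌊M'⌋ with hb | hb | hb
    · rw [hxM M' ω, if_pos hb]; exact hbd1 M ω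
    · rw [hxM M' ω, if_neg (by omega), if_pos hb, hxM M ω]
      split_ifs with a1 a2
      · exfalso; omega
      · have he : (⌊M⌋ : ℤ) = ⌊M'⌋ := by omega
        have he' : ((⌊M⌋ : ℤ) : ℝ) = ((⌊M'⌋ : ℤ) : ℝ) := by exact_mod_cast he
        linarith
      · have h3 := Int.floor_le M'
        linarith
    · rw [hxM M' ω, if_neg (by omega), if_neg (by omega), hxM M ω,
        if_neg (by omega), if_neg (by omega)]
  have hsum : ∀ M : ℝ, 0 ≤ M → M ≤ n → ∑ ω, xM M ω = M := by
    intro M hM0 hMn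
    have hk0 : (0:ℤ) ≤ ⌊M⌋ := Int.floor_nonneg.2 hM0
    set k : ℕ := ⌊M⌋.toNat with hkdef
    have hkk : ((k : ℕ) : ℤ) = ⌊M⌋ := Int.toNat_of_nonneg hk0
    have hkr : ((k : ℕ) : ℝ) = ((⌊M⌋ : ℤ) : ℝ) := by exact_mod_cast hkk
    have hfl := Int.floor_le M
    have hkn : k ≤ n := by
      have h5 : ((⌊M⌋ : ℤ) : ℝ) ≤ ((n : ℤ) : ℝ) := by push_cast; linarith
      have h6 : (⌊M⌋ : ℤ) ≤ (n : ℤ) := by exact_mod_cast h5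
      omega
    have hf : ∀ ω : Fin n, xM M ω =
        if (ω : ℕ) < k then 1 else if (ω : ℕ) = k then (M - ((⌊M⌋ : ℤ) : ℝ)) else 0 := by
      intro ω
      rw [hxM]
      have e1 : (((ω : ℕ) : ℤ) < ⌊M⌋) ↔ ((ω : ℕ) < k) := by omega
      have e2 : ((((ω : ℕ)) : ℤ) = ⌊M⌋) ↔ ((ω : ℕ) = k) := by omega
      simp only [e1, e2]
    rw [sum_step' k (M - ((⌊M⌋ : ℤ) : ℝ)) _ hf]
    rcases lt_or_eq_of_le hkn with hlt | heq
    · rw [if_pos hlt, min_eq_left hkn]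
      rw [hkr]; ring
    · rw [if_neg (by omega), min_eq_left hkn]
      have h7 : ((k : ℕ) : ℝ) = (n : ℝ) := by exact_mod_cast heq
      rw [h7]
      have h8 : ((n : ℝ) : ℝ) ≤ M := by
        have : ((⌊M⌋ : ℤ) : ℝ) = ((k:ℕ) : ℝ) := hkr.symm
        rw [h7] at this
        linarith [this ▸ hfl]
      linarith
  -- structure around ωdag
  set Slt := ∑ j ∈ Finset.univ.filter (· < ωdag), μ j * (v 0 j - v 1 j) with hSltdef
  set cdag := μ ωdag * (v 0 ωdag - v 1 ωdag) with hcdagdef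
  set q := (-Slt) / cdag with hqdef
  have hsplitle : (∑ j ∈ Finset.univ.filter (· ≤ ωdag), μ j * (v 0 j - v 1 j)) = Slt + cdag := by
    have hins : Finset.univ.filter (· ≤ ωdag) = insert ωdag (Finset.univ.filter (· < ωdag)) := by
      ext j
      simp [le_iff_lt_or_eq, or_comm]
    rw [hins, Finset.sum_insert (by simp), hSltdef, hcdagdef]
    ring
  have hSlt : Slt ≤ 0 := by
    rcases Nat.eq_zero_or_pos (ωdag : ℕ) with h0 | h0
    · have he : Finset.univ.filter (· < ωdag) = (∅ : Finset (Fin n)) := by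
        ext j; simp [Fin.lt_def, h0]
      rw [hSltdef, he, Finset.sum_empty]
    · have hω' : (ωdag : ℕ) - 1 < n := by omega
      have hlt : (⟨(ωdag : ℕ) - 1, hω'⟩ : Fin n) < ωdag := by
        rw [Fin.lt_def]; exact Nat.sub_lt h0 one_pos
      have h2 := hωdag2 _ hlt
      have heq : Finset.univ.filter (· ≤ (⟨(ωdag : ℕ) - 1, hω'⟩ : Fin n))
          = Finset.univ.filter (· < ωdag) := by
        ext j
        simp only [Finset.mem_filter, Finset.mem_univ, true_and, Fin.le_def, Fin.lt_def]
        omega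
      rw [heq] at h2
      rw [hSltdef]
      exact h2
  have hcdag : 0 < cdag := by
    rw [hsplitle] at hωdag1
    linarith
  have hΔdag : 0 < v 0 ωdag - v 1 ωdag := by
    by_contra h
    push_neg at h
    have := mul_nonpos_of_nonneg_of_nonpos (hμ0 ωdag).le h
    rw [← hcdagdef] at this
    linarith
  have hnω : nminus ≤ (ωdag : ℕ) := by
    by_contra h
    push_neg at h
    have := (horder1 ωdag).2 h
    linarith
  have hq0 : 0 ≤ q := div_nonneg (by linarith) hcdag.le
  have hq1 : q < 1 := by
    rw [hqdef, div_lt_one hcdag]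
    rw [hsplitle] at hωdag1
    linarith
  have hxstar' : ∀ ω : Fin n, xstar ω =
      if (ω : ℕ) < (ωdag : ℕ) then 1 else if (ω : ℕ) = (ωdag : ℕ) then q else 0 := by
    intro ω
    rw [hxstar]
    have e1 : (ω < ωdag) ↔ ((ω : ℕ) < (ωdag : ℕ)) := Fin.lt_def
    have e2 : (ω = ωdag) ↔ ((ω : ℕ) = (ωdag : ℕ)) := by simp [Fin.ext_iff]
    simp only [e1, e2]
  have hMs : Mstar = ((ωdag : ℕ) : ℝ) + q := by
    rw [hMstar, sum_step' (ωdag : ℕ) q xstar hxstar', min_eq_left ωdag.isLt.le,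
      if_pos ωdag.isLt]
  have hdagn : ((ωdag : ℕ) : ℝ) < (n : ℝ) := by exact_mod_cast ωdag.isLt
  have hMs0 : 0 ≤ Mstar := by rw [hMs]; positivity
  have hdagn1 : ((ωdag : ℕ) : ℝ) + 1 ≤ (n : ℝ) := by exact_mod_cast ωdag.isLt
  have hMsn : Mstar ≤ (n : ℝ) := by rw [hMs]; linarith
  have hflMs : ⌊Mstar⌋ = ((ωdag : ℕ) : ℤ) := by
    rw [Int.floor_eq_iff]
    constructor
    · push_cast; linarith
    · push_cast; linarith
  have hxx : ∀ ω, xstar ω = xM Mstar ω := by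
    intro ω
    rw [hxstar' ω, hxM, hflMs]
    have hval : Mstar - ((((ωdag : ℕ)) : ℤ) : ℝ) = q := by push_cast; linarith
    rw [hval]
    have e1 : ((((ω : ℕ)) : ℤ) < (((ωdag : ℕ)) : ℤ)) ↔ ((ω : ℕ) < (ωdag : ℕ)) := by omega
    have e2 : ((((ω : ℕ)) : ℤ) = (((ωdag : ℕ)) : ℤ)) ↔ ((ω : ℕ) = (ωdag : ℕ)) := by omega
    simp only [e1, e2]
  have hgstar : ∑ ω, μ ω * xstar ω * (v 0 ω - v 1 ω) = 0 := by
    have hterm : ∀ ω : Fin n, μ ω * xstar ω * (v 0 ω - v 1 ω) =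
        (if ω < ωdag then μ ω * (v 0 ω - v 1 ω) else 0) +
        (if ω = ωdag then q * cdag else 0) := by
      intro ω
      rw [hxstar ω]
      rcases lt_trichotomy ω ωdag with h | h | h
      · rw [if_pos h, if_pos h, if_neg (ne_of_lt h)]; ring
      · subst h
        rw [if_neg (lt_irrefl _), if_pos rfl, if_neg (lt_irrefl _), if_pos rfl,
          hcdagdef, hqdef]
        ring
      · rw [if_neg (not_lt_of_gt h), if_neg (ne_of_gt h), if_neg (not_lt_of_gt h),
          if_neg (ne_of_gt h)]
        ring
    rw [Finset.sum_congr rfl (fun ω _ => hterm ω), Finset.sum_add_distrib,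
      ← Finset.sum_filter,
      Finset.sum_ite_eq' Finset.univ ωdag (fun _ => q * cdag)]
    simp only [Finset.mem_univ, if_pos]
    have hqc : q * cdag = -Slt := div_mul_cancel₀ _ (ne_of_gt hcdag)
    rw [← hSltdef, hqc]
    ring
  have hΔpos : ∀ ω : Fin n, nminus ≤ (ω : ℕ) → 0 < v 0 ω - v 1 ω := by
    intro ω h
    by_contra hc
    push_neg at hc
    have := (horder1 ω).1 hc
    omega
  have hμle : ∀ ω, μ ω ≤ 1 := by
    intro ω
    rw [← hμ1]
    exact Finset.single_le_sum (fun i _ => (hμ0 i).le) (Finset.mem_univ ω)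
  have key : ∀ y z : Fin n → ℝ,
      (∑ ω, μ ω * (y ω - z ω) * (v 0 ω - v 1 ω))
        = (∑ ω, μ ω * y ω * (v 0 ω - v 1 ω)) - ∑ ω, μ ω * z ω * (v 0 ω - v 1 ω) := by
    intro y z
    rw [← Finset.sum_sub_distrib]
    exact Finset.sum_congr rfl (fun ω _ => by ring)
  intro M hM0 hMn
  have hflM := Int.floor_le M
  have hflM1 := Int.lt_floor_add_one M
  refine ⟨?_, ?_, ?_⟩
  · -- (i)
    by_cases hcase : (nminus : ℝ) ≤ M
    · apply Finset.sum_nonneg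
      intro ω _
      by_cases hω : (ω : ℕ) < nminus
      · have hfloor : ((nminus : ℕ) : ℤ) ≤ ⌊M⌋ := by
          rw [Int.le_floor]; push_cast; exact hcase
        have hx1 : xM M ω = 1 := by rw [hxM, if_pos (by omega)]
        rw [hx1]; simp
      · exact mul_nonneg (mul_nonneg (hμ0 ω).le (by linarith [hbd1 M ω]))
          (hΔpos ω (le_of_not_gt hω)).le
    · push_neg at hcase
      have hS1 : (∑ ω, μ ω * xM M ω * (v 0 ω - v 1 ω)) ≤ 0 := by
        apply Finset.sum_nonpos
        intro ω _
        by_cases hω : (ω : ℕ) < nminus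
        · exact mul_nonpos_of_nonneg_of_nonpos
            (mul_nonneg (hμ0 ω).le (hbd0 M ω)) ((horder1 ω).2 hω)
        · have hfl2 : (⌊M⌋ : ℤ) < (nminus : ℤ) := by
            rw [Int.floor_lt]; push_cast; exact hcase
          have hx0 : xM M ω = 0 := by
            rw [hxM, if_neg (by omega), if_neg (by omega)]
          rw [hx0]; simp
      have heq2 : (∑ ω, μ ω * (1 - xM M ω) * (v 0 ω - v 1 ω))
          = (∑ ω, μ ω * (v 0 ω - v 1 ω)) - ∑ ω, μ ω * xM M ω * (v 0 ω - v 1 ω) := by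
        rw [← Finset.sum_sub_distrib]
        exact Finset.sum_congr rfl (fun ω _ => by ring)
      rw [heq2]; linarith
  · -- (ii)
    have hneg : (∑ ω, μ ω * xM M ω * (v 1 ω - v 0 ω))
        = -∑ ω, μ ω * xM M ω * (v 0 ω - v 1 ω) := by
      rw [← Finset.sum_neg_distrib]
      exact Finset.sum_congr rfl (fun ω _ => by ring)
    constructor
    · intro hS
      rw [hneg] at hS
      by_contra hgt
      push_neg at hgt
      have hdnn : ∀ ω, 0 ≤ xM M ω - xstar ω := fun ω => by
        rw [hxx ω]; linarith [hmono Mstar M hgt.le ω]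
      have hdiffsum : (∑ ω, (xM M ω - xstar ω)) = M - Mstar := by
        rw [Finset.sum_sub_distrib, hsum M hM0 hMn, ← hMstar]
      have hex : ∃ ω : Fin n, 0 < xM M ω - xstar ω := by
        by_contra hno
        push_neg at hno
        have : (∑ ω, (xM M ω - xstar ω)) ≤ 0 :=
          Finset.sum_nonpos (fun ω _ => hno ω)
        linarith
      obtain ⟨ω0, hω0⟩ := hex
      have hfloorM : ((ωdag : ℕ) : ℤ) ≤ ⌊M⌋ := by
        rw [← hflMs]; exact Int.floor_le_floor hgt.le
      have htnn : ∀ ω ∈ Finset.univ, 0 ≤ μ ω * (xM M ω - xstar ω) * (v 0 ω - v 1 ω) := by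
        intro ω _
        by_cases hω : (ω : ℕ) < nminus
        · have hx1 : xM M ω = 1 := by rw [hxM, if_pos (by omega)]
          have hs1 : xstar ω = 1 := by rw [hxstar' ω, if_pos (by omega)]
          rw [hx1, hs1]; simp
        · exact mul_nonneg (mul_nonneg (hμ0 ω).le (hdnn ω))
            (hΔpos ω (le_of_not_gt hω)).le
      have hω0n : nminus ≤ (ω0 : ℕ) := by
        by_contra hc
        push_neg at hc
        have hx1 : xM M ω0 = 1 := by rw [hxM, if_pos (by omega)]
        have hs1 : xstar ω0 = 1 := by rw [hxstar' ω0, if_pos (by omega)]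
        rw [hx1, hs1] at hω0; linarith
      have hpos0 : 0 < μ ω0 * (xM M ω0 - xstar ω0) * (v 0 ω0 - v 1 ω0) :=
        mul_pos (mul_pos (hμ0 ω0) hω0) (hΔpos ω0 hω0n)
      have hgt0 : 0 < ∑ ω, μ ω * (xM M ω - xstar ω) * (v 0 ω - v 1 ω) :=
        Finset.sum_pos' htnn ⟨ω0, Finset.mem_univ ω0, hpos0⟩
      rw [key (xM M) xstar, hgstar] at hgt0
      linarith
    · intro hMle
      rw [hneg]
      by_cases hcase : M ≤ (nminus : ℝ)
      · have hS1 : (∑ ω, μ ω * xM M ω * (v 0 ω - v 1 ω)) ≤ 0 := by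
          apply Finset.sum_nonpos
          intro ω _
          by_cases hω : (ω : ℕ) < nminus
          · exact mul_nonpos_of_nonneg_of_nonpos
              (mul_nonneg (hμ0 ω).le (hbd0 M ω)) ((horder1 ω).2 hω)
          · have hflle : (⌊M⌋ : ℤ) ≤ (nminus : ℤ) := by
              have h9 : ((⌊M⌋ : ℤ) : ℝ) ≤ ((nminus : ℤ) : ℝ) := by push_cast; linarith
              exact_mod_cast h9
            rcases eq_or_lt_of_le (show (⌊M⌋ : ℤ) ≤ ((ω : ℕ) : ℤ) by omega) with he | hlt2
            · have hx : xM M ω = M - ((⌊M⌋ : ℤ) : ℝ) := by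
                rw [hxM, if_neg (by omega), if_pos he.symm]
              have h10 : (⌊M⌋ : ℤ) = (nminus : ℤ) := by omega
              have h11 : ((⌊M⌋ : ℤ) : ℝ) = ((nminus : ℕ) : ℝ) := by
                rw [h10]; push_cast; ring
              have h12 : M - ((⌊M⌋ : ℤ) : ℝ) = 0 := by rw [h11]; linarith
              rw [hx, h12]; simp
            · have hx0 : xM M ω = 0 := by
                rw [hxM, if_neg (by omega), if_neg (by omega)]
              rw [hx0]; simp
        linarith
      · push_neg at hcase
        have hfloorn : ((nminus : ℕ) : ℤ) ≤ ⌊M⌋ := by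
          rw [Int.le_floor]; push_cast; linarith
        have hterm : ∀ ω ∈ Finset.univ,
            μ ω * (xM M ω - xstar ω) * (v 0 ω - v 1 ω) ≤ 0 := by
          intro ω _
          by_cases hω : (ω : ℕ) < nminus
          · have hx1 : xM M ω = 1 := by rw [hxM, if_pos (by omega)]
            have hs1 : xstar ω = 1 := by rw [hxstar' ω, if_pos (by omega)]
            rw [hx1, hs1]; simp
          · refine mul_nonpos_of_nonpos_of_nonneg ?_ (hΔpos ω (le_of_not_gt hω)).le
            refine mul_nonpos_of_nonneg_of_nonpos (hμ0 ω).le ?_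
            rw [hxx ω]
            linarith [hmono M Mstar hMle ω]
        have hsle : (∑ ω, μ ω * (xM M ω - xstar ω) * (v 0 ω - v 1 ω)) ≤ 0 :=
          Finset.sum_nonpos hterm
        rw [key (xM M) xstar, hgstar] at hsle
        linarith
  · -- (iii)
    intro hMle
    have hterm : ∀ ω ∈ Finset.univ,
        μ ω * ((xstar ω - xM M ω) * u 1 ω + ((1 - xstar ω) - (1 - xM M ω)) * u 0 ω)
          ≤ xstar ω - xM M ω := by
      intro ω _
      have hd : 0 ≤ xstar ω - xM M ω := by
        rw [hxx ω]; linarith [hmono M Mstar hMle ω]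
      have hmu := hμ0 ω
      have hmu1 := hμle ω
      have hu1 := (hu 1 ω).2
      have hu0 := (hu 0 ω).1
      have hup := (hupref ω).le
      have hrw : μ ω * ((xstar ω - xM M ω) * u 1 ω + ((1 - xstar ω) - (1 - xM M ω)) * u 0 ω)
          = (μ ω * (xstar ω - xM M ω)) * (u 1 ω - u 0 ω) := by ring
      rw [hrw]
      have h1 : 0 ≤ μ ω * (xstar ω - xM M ω) := mul_nonneg hmu.le hd
      calc (μ ω * (xstar ω - xM M ω)) * (u 1 ω - u 0 ω)
          ≤ (μ ω * (xstar ω - xM M ω)) * 1 :=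
            mul_le_mul_of_nonneg_left (by linarith) h1
        _ = μ ω * (xstar ω - xM M ω) := mul_one _
        _ ≤ 1 * (xstar ω - xM M ω) := mul_le_mul_of_nonneg_right hmu1 hd
        _ = xstar ω - xM M ω := one_mul _
    refine le_trans (Finset.sum_le_sum hterm) ?_
    rw [Finset.sum_sub_distrib, hsum M hM0 hMn, ← hMstar]
end

section
/- Fix p0 = 1/10 and κ with 0 < κ ≤ 2p0, and set ε_v = κ/(40 p0). In the two-state three-action instance with designer utility u(c,ω)=1 and u(a,ω)=u(b,ω)=0, let μ1, μ2 ∈ [p0, 3p0] with |μ1 − μ2| ≥ κ, let δ ≥ 0, and let π be any signaling scheme with a finite signal set. If U(μ1, π) ≥ 2μ1/(1−2ε_v) − δ, then U(μ2, π) ≤ (μ2/μ1)·δ. -/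
open Finset

open Classical in
/-- The designer's expected utility in the two-state three-action instance:
the receiver takes the designer-preferred action `c` exactly when the posterior
probability of state 1 lies in `[1/2 − εv, 1/2 + εv]` (ties broken in favor of `c`),
and the designer gets utility 1 from `c` and 0 otherwise. Here `π ω t = π(t|ω)`. -/
noncomputable def designerPay {S : Type*} [Fintype S] (εv μ : ℝ)
    (π : Fin 2 → S → ℝ) : ℝ :=
  ∑ t, if 1 / 2 - εv ≤ μ * π 1 t / (μ * π 1 t + (1 - μ) * π 0 t) ∧
          μ * π 1 t / (μ * π 1 t + (1 - μ) * π 0 t) ≤ 1 / 2 + εv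
        then μ * π 1 t + (1 - μ) * π 0 t else 0

/-- The c-set condition: the posterior at prior `μ` on signal `t` lies in the
acceptance interval `[1/2 − e, 1/2 + e]`. -/
def cset {S : Type*} (e μ : ℝ) (π : Fin 2 → S → ℝ) (t : S) : Prop :=
  1 / 2 - e ≤ μ * π 1 t / (μ * π 1 t + (1 - μ) * π 0 t) ∧
  μ * π 1 t / (μ * π 1 t + (1 - μ) * π 0 t) ≤ 1 / 2 + e

open Classical in
lemma designerPay_eq {S : Type*} [Fintype S] (e μ : ℝ) (π : Fin 2 → S → ℝ) :
    designerPay e μ π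
      = ∑ t, if cset e μ π t then μ * π 1 t + (1 - μ) * π 0 t else 0 := by
  unfold designerPay cset
  refine Finset.sum_congr rfl fun t _ => ?_
  congr

/-- Mass bound from the lower posterior condition: a signal whose posterior is at
least `1/2 − e` has total mass at most `2μ/(1−2e)` times its state-1 probability. -/
lemma mass_le (e μ x y : ℝ) (he : 0 < 1 / 2 - e) (hμ : 0 < μ)
    (hμ' : μ ≤ 1) (hx : 0 ≤ x) (hy : 0 ≤ y)
    (h : 1 / 2 - e ≤ μ * x / (μ * x + (1 - μ) * y)) :
    μ * x + (1 - μ) * y ≤ 2 * μ / (1 - 2 * e) * x := by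
  have h2e : 0 < 1 - 2 * e := by linarith
  have hm : 0 ≤ μ * x + (1 - μ) * y := by
    have h1 : 0 ≤ (1 - μ) * y := mul_nonneg (by linarith) hy
    have h2 : 0 ≤ μ * x := mul_nonneg hμ.le hx
    linarith
  rcases hm.lt_or_eq with hm' | hm'
  · have hi := (le_div_iff₀ hm').mp h
    rw [div_mul_eq_mul_div, le_div_iff₀ h2e]
    nlinarith
  · rw [← hm']
    have : 0 ≤ 2 * μ / (1 - 2 * e) := div_nonneg (by linarith) h2e.le
    exact mul_nonneg this hx

set_option maxHeartbeats 1000000 in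
/-- Disjointness of the two acceptance sets: with `εv = κ/4` and priors at least `κ`
apart in `[1/10, 3/10]`, no signal can have its posterior in the acceptance interval
at both priors. -/
lemma disj_aux (κ ν1 ν2 x y : ℝ) (hκ0 : 0 < κ) (hκ : κ ≤ 1 / 5)
    (hν1 : 1 / 10 ≤ ν1) (hν2 : ν2 ≤ 3 / 10) (hsep : ν1 + κ ≤ ν2)
    (hx : 0 ≤ x) (hy : 0 ≤ y)
    (h1 : 1 / 2 - κ / 4 ≤ ν1 * x / (ν1 * x + (1 - ν1) * y))
    (h2 : ν2 * x / (ν2 * x + (1 - ν2) * y) ≤ 1 / 2 + κ / 4) : False := by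
  have hν1' : ν1 ≤ 3 / 10 := by linarith
  have hν2' : 1 / 10 ≤ ν2 := by linarith
  have hepos : 0 < 1 / 2 - κ / 4 := by linarith
  have hm1 : 0 ≤ ν1 * x + (1 - ν1) * y := by
    have h5 := mul_nonneg (by linarith : (0:ℝ) ≤ ν1) hx
    have h6 := mul_nonneg (by linarith : (0:ℝ) ≤ 1 - ν1) hy
    linarith
  have hm1pos : 0 < ν1 * x + (1 - ν1) * y := by
    rcases hm1.lt_or_eq with h | h
    · exact h
    · exfalso; rw [← h, div_zero] at h1; linarith
  have hi := (le_div_iff₀ hm1pos).mp h1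
  have hxpos : 0 < x := by nlinarith
  have hm2pos : 0 < ν2 * x + (1 - ν2) * y := by
    have h7 := mul_nonneg (by linarith : (0:ℝ) ≤ 1 - ν2) hy
    nlinarith
  have hii := (div_le_iff₀ hm2pos).mp h2
  have hi' : (1 / 2 - κ / 4) * ((1 - ν1) * y) ≤ (1 / 2 + κ / 4) * (ν1 * x) := by linarith
  have hii' : (1 / 2 - κ / 4) * (ν2 * x) ≤ (1 / 2 + κ / 4) * ((1 - ν2) * y) := by linarith
  have hA : 0 ≤ (1 - ν2) * (1 / 2 + κ / 4) := mul_nonneg (by linarith) (by linarith)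
  have hB : 0 ≤ (1 - ν1) * (1 / 2 - κ / 4) := mul_nonneg (by linarith) (by linarith)
  have h3 := mul_le_mul_of_nonneg_left hi' hA
  have h4 := mul_le_mul_of_nonneg_left hii' hB
  have hs : ν1 + ν2 - 2 * ν1 * ν2 ≤ 42 / 100 - (2 / 5) * κ := by
    nlinarith [mul_nonneg (by linarith : (0:ℝ) ≤ ν2 - κ - ν1) (by linarith : (0:ℝ) ≤ 1 - 2 * ν2),
      mul_nonneg (by linarith : (0:ℝ) ≤ 3 / 10 - ν2) (by linarith : (0:ℝ) ≤ 7 / 10 - ν2),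
      mul_nonneg hκ0.le (by linarith : (0:ℝ) ≤ 3 / 10 - ν2)]
  have hBr : 0 < ν2 * (1 - ν1) * (1 / 2 - κ / 4) ^ 2 - ν1 * (1 - ν2) * (1 / 2 + κ / 4) ^ 2 := by
    nlinarith [mul_le_mul_of_nonneg_left hs (by linarith : (0:ℝ) ≤ κ / 4),
      mul_nonneg (mul_nonneg hκ0.le hκ0.le) (by linarith : (0:ℝ) ≤ ν2 - ν1 - κ),
      mul_pos (mul_pos hκ0 hκ0) hκ0]
  nlinarith [mul_pos hBr hxpos]

/-- key step of Lemma 7: with `p0 = 1/10`, `0 < κ ≤ 2p0`, and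
`εv = κ/(40p0)`, if a scheme `π` is `δ`-optimal for a prior `μ1 ∈ [p0, 3p0]`, then for
any prior `μ2 ∈ [p0, 3p0]` with `|μ1 − μ2| ≥ κ` the designer's utility under `μ2` is
at most `(μ2/μ1)·δ`. -/
theorem delta_optimal_implies_large_regret_elsewhere
    {S : Type*} [Fintype S]
    (p0 κ εv μ1 μ2 δ : ℝ) (π : Fin 2 → S → ℝ)
    (hp0 : p0 = 1 / 10)
    (hκ0 : 0 < κ) (hκ : κ ≤ 2 * p0)
    (hεv : εv = κ / (40 * p0))
    (hμ1 : μ1 ∈ Set.Icc p0 (3 * p0)) (hμ2 : μ2 ∈ Set.Icc p0 (3 * p0))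
    (hsep : κ ≤ |μ1 - μ2|)
    (hδ : 0 ≤ δ)
    (hπ0 : ∀ ω t, 0 ≤ π ω t) (hπ1 : ∀ ω, ∑ t, π ω t = 1)
    (hopt : 2 * μ1 / (1 - 2 * εv) - δ ≤ designerPay εv μ1 π) :
    designerPay εv μ2 π ≤ (μ2 / μ1) * δ := by
  classical
  subst hp0
  have he : εv = κ / 4 := by rw [hεv]; ring
  subst he
  obtain ⟨h1a, h1b⟩ := hμ1
  obtain ⟨h2a, h2b⟩ := hμ2
  have hκ5 : κ ≤ 1 / 5 := by linarith
  have hepos : 0 < 1 / 2 - κ / 4 := by linarith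
  have h2e : 0 < 1 - 2 * (κ / 4) := by linarith
  have hμ1p : 0 < μ1 := by linarith
  have hμ2p : 0 < μ2 := by linarith
  have hμ1ne : μ1 ≠ 0 := hμ1p.ne'
  have h2ene : (1 : ℝ) - 2 * (κ / 4) ≠ 0 := h2e.ne'
  have hdisj : ∀ t : S, cset (κ / 4) μ1 π t → ¬ cset (κ / 4) μ2 π t := by
    intro t h1 h2
    rcases le_abs.mp hsep with h | h
    · exact disj_aux κ μ2 μ1 (π 1 t) (π 0 t) hκ0 hκ5 h2a (by linarith) (by linarith)
        (hπ0 1 t) (hπ0 0 t) h2.1 h1.2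
    · exact disj_aux κ μ1 μ2 (π 1 t) (π 0 t) hκ0 hκ5 h1a (by linarith) (by linarith)
        (hπ0 1 t) (hπ0 0 t) h1.1 h2.2
  rw [designerPay_eq] at hopt ⊢
  set X1 : ℝ := ∑ t, if cset (κ / 4) μ1 π t then π 1 t else 0 with hX1
  set X2 : ℝ := ∑ t, if cset (κ / 4) μ2 π t then π 1 t else 0 with hX2
  have hb1 : (∑ t, if cset (κ / 4) μ1 π t then μ1 * π 1 t + (1 - μ1) * π 0 t else 0)
      ≤ 2 * μ1 / (1 - 2 * (κ / 4)) * X1 := by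
    rw [hX1, Finset.mul_sum]
    refine Finset.sum_le_sum fun t _ => ?_
    by_cases h : cset (κ / 4) μ1 π t
    · rw [if_pos h, if_pos h]
      exact mass_le (κ / 4) μ1 (π 1 t) (π 0 t) hepos hμ1p (by linarith)
        (hπ0 1 t) (hπ0 0 t) h.1
    · simp [h]
  have hb2 : (∑ t, if cset (κ / 4) μ2 π t then μ2 * π 1 t + (1 - μ2) * π 0 t else 0)
      ≤ 2 * μ2 / (1 - 2 * (κ / 4)) * X2 := by
    rw [hX2, Finset.mul_sum]
    refine Finset.sum_le_sum fun t _ => ?_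
    by_cases h : cset (κ / 4) μ2 π t
    · rw [if_pos h, if_pos h]
      exact mass_le (κ / 4) μ2 (π 1 t) (π 0 t) hepos hμ2p (by linarith)
        (hπ0 1 t) (hπ0 0 t) h.1
    · simp [h]
  have hsum : X1 + X2 ≤ 1 := by
    rw [hX1, hX2, ← Finset.sum_add_distrib, ← hπ1 1]
    refine Finset.sum_le_sum fun t _ => ?_
    by_cases h1 : cset (κ / 4) μ1 π t
    · have h2 := hdisj t h1
      simp [h1, h2]
    · by_cases h2 : cset (κ / 4) μ2 π t <;> simp [h1, h2, hπ0 1 t]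
  have hc1 : 0 < 2 * μ1 / (1 - 2 * (κ / 4)) := by positivity
  have hcX1 : 2 * μ1 / (1 - 2 * (κ / 4)) - δ ≤ 2 * μ1 / (1 - 2 * (κ / 4)) * X1 :=
    hopt.trans hb1
  have hcX2 : 2 * μ1 / (1 - 2 * (κ / 4)) * X2 ≤ δ := by
    nlinarith [mul_le_mul_of_nonneg_left (show X2 ≤ 1 - X1 by linarith) hc1.le]
  have hc2eq : 2 * μ2 / (1 - 2 * (κ / 4)) = μ2 / μ1 * (2 * μ1 / (1 - 2 * (κ / 4))) := by
    rw [div_mul_div_comm, div_eq_div_iff h2ene (mul_ne_zero hμ1ne h2ene)]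
    ring
  have hratio : 0 ≤ μ2 / μ1 := by positivity
  calc (∑ t, if cset (κ / 4) μ2 π t then μ2 * π 1 t + (1 - μ2) * π 0 t else 0)
      ≤ 2 * μ2 / (1 - 2 * (κ / 4)) * X2 := hb2
    _ = μ2 / μ1 * (2 * μ1 / (1 - 2 * (κ / 4)) * X2) := by rw [hc2eq, mul_assoc]
    _ ≤ (μ2 / μ1) * δ := mul_le_mul_of_nonneg_left hcX2 hratio
end

section
/- Fix p0 = 1/10, κ with 0 < κ ≤ 2p0, ε_v = κ/(40 p0), and the grid Γ = {p0, p0+κ, p0+2κ, …, 3p0}. Let Γ' ⊆ Γ with |Γ'| ≥ 2, let C ≥ 1, and let P' be a probability distribution on Γ' with P'(μ) ≥ 1/(C·|Γ'|) for every μ ∈ Γ'. Then, in the two-state three-action instance with designer utility u(c,ω)=1 and u(a,ω)=u(b,ω)=0, for every finite signal set S and every signaling scheme π: {0,1} → Δ(S), Σ_{μ∈Γ'} P'(μ)·(2μ/(1−2ε_v) − U(μ, π)) ≥ 2p0/(3(1−2ε_v)C). -/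
/-!
A signal leads the receiver to play `c` under prior `μ` only if its likelihood ratio
`π(s|1)/π(s|0)` puts the posterior odds within a factor `(1/2+εv)/(1/2-εv)` of even. Grid
priors are `κ = 4εv` apart, which moves the prior odds by more than the square of that
factor, so every signal triggers `c` under at most one grid prior: the state-1 masses `q μ`
of the `c`-signals sum to at most 1 over `Γ'`. Under prior `μ` the `c`-signals carry total
probability at most `2μ/(1-2εv) · q μ`, so the regret at `μ` is at least
`2p0/(1-2εv) · (1 - q μ)`. Averaging with weights at least `1/(C|Γ'|)` leaves at least
`(|Γ'| - 1)/|Γ'| ≥ 1/2` of `2p0/((1-2εv)C)`.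
-/

open Finset

noncomputable def posterior (μ x y : ℝ) : ℝ :=
  μ * x / (μ * x + (1 - μ) * y)

/-- The receiver plays `c` after a signal `s` with `x = π(s|1)` and `y = π(s|0)`. -/
def InWindow (εv μ x y : ℝ) : Prop :=
  1 / 2 - εv ≤ posterior μ x y ∧ posterior μ x y ≤ 1 / 2 + εv

theorem inWindow_iff {εv μ x y : ℝ} (hε : εv < 1 / 2) (hD : 0 ≤ μ * x + (1 - μ) * y) :
    InWindow εv μ x y ↔ 0 < μ * x + (1 - μ) * y ∧
      (1 / 2 - εv) * (μ * x + (1 - μ) * y) ≤ μ * x ∧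
      μ * x ≤ (1 / 2 + εv) * (μ * x + (1 - μ) * y) := by
  constructor
  · rintro ⟨hlo, hhi⟩
    -- the posterior is `0` when the signal has probability `0`, which is below the window
    have hDpos : 0 < μ * x + (1 - μ) * y := by
      refine hD.lt_of_ne fun h => ?_
      rw [posterior, ← h, div_zero] at hlo
      linarith
    exact ⟨hDpos, (le_div_iff₀ hDpos).1 hlo, (div_le_iff₀ hDpos).1 hhi⟩
  · rintro ⟨hDpos, hlo, hhi⟩
    exact ⟨(le_div_iff₀ hDpos).2 hlo, (div_le_iff₀ hDpos).2 hhi⟩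

theorem window_gap {εv μ μ' : ℝ} (hε0 : 0 < εv) (hε : εv ≤ 1 / 8) (hμ : 0 ≤ μ)
    (hμμ' : μ + 4 * εv ≤ μ') :
    (1 / 2 + εv) ^ 2 * (μ * (1 - μ')) < (1 / 2 - εv) ^ 2 * ((1 - μ) * μ') := by
  -- with `K = (1/2-εv)^2 (1-μ) + (1/2+εv)^2 μ = (1/2-εv)^2 + 2εv μ`, the right side minus
  -- the left side is `(μ' - μ - 4εv) K + εv (4K - 2μ(1-μ))`, and `K > 1/8 ≥ μ(1-μ)/2`
  have hK : 1 / 8 < (1 / 2 - εv) ^ 2 + 2 * εv * μ := by nlinarith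
  have hμμ : μ * (1 - μ) ≤ 1 / 4 := by nlinarith [sq_nonneg (μ - 1 / 2)]
  nlinarith [mul_nonneg (sub_nonneg.2 hμμ') (hK.le.trans' (by norm_num)),
    mul_pos hε0 (by linarith : 0 < 4 * ((1 / 2 - εv) ^ 2 + 2 * εv * μ) - 2 * (μ * (1 - μ)))]

theorem InWindow.not_inWindow_of_add_le {εv μ μ' x y : ℝ} (hε0 : 0 < εv) (hε : εv ≤ 1 / 8)
    (hμ : 0 ≤ μ) (hμμ' : μ + 4 * εv ≤ μ') (hμ' : μ' ≤ 1) (hx : 0 ≤ x) (hy : 0 ≤ y)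
    (h : InWindow εv μ x y) : ¬ InWindow εv μ' x y := by
  intro h'
  have hden : ∀ ν, 0 ≤ ν → ν ≤ 1 → 0 ≤ ν * x + (1 - ν) * y := fun ν h0 h1 => by
    have := sub_nonneg.2 h1
    positivity
  obtain ⟨hD, hlo, -⟩ := (inWindow_iff (by linarith) (hden μ hμ (by linarith))).1 h
  obtain ⟨-, -, hhi⟩ := (inWindow_iff (by linarith) (hden μ' (by linarith) hμ')).1 h'
  have hxpos : 0 < x := by
    refine hx.lt_of_ne fun hx0 => ?_
    subst hx0
    nlinarith
  have hlo' : (1 / 2 - εv) * ((1 - μ) * y) ≤ (1 / 2 + εv) * (μ * x) := by linarith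
  have hhi' : (1 / 2 - εv) * (μ' * x) ≤ (1 / 2 + εv) * ((1 - μ') * y) := by linarith
  have hc : 0 ≤ (1 / 2 + εv) * (1 - μ') := mul_nonneg (by linarith) (by linarith)
  have hc' : 0 ≤ (1 / 2 - εv) * (1 - μ) := mul_nonneg (by linarith) (by linarith)
  -- eliminating `y` between the two bounds leaves the reverse of `window_gap`, times `x`
  nlinarith [mul_le_mul_of_nonneg_left hlo' hc, mul_le_mul_of_nonneg_left hhi' hc',
    mul_lt_mul_of_pos_right (window_gap hε0 hε hμ hμμ') hxpos]

section Scheme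

variable {S : Type*} [Fintype S]

open Classical in
/-- The probability, in state 1, that the receiver plays `c` under prior `μ`. -/
noncomputable def windowMass (εv μ : ℝ) (π : Fin 2 → S → ℝ) : ℝ :=
  ∑ t, if InWindow εv μ (π 1 t) (π 0 t) then π 1 t else 0

theorem windowMass_le_one {εv μ : ℝ} {π : Fin 2 → S → ℝ} (hπ0 : ∀ ω t, 0 ≤ π ω t)
    (hπ1 : ∑ t, π 1 t = 1) : windowMass εv μ π ≤ 1 := by
  rw [← hπ1, windowMass]
  gcongr with t
  split_ifs
  exacts [le_rfl, hπ0 1 t]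

theorem designerPay_le_mul_windowMass {εv μ : ℝ} {π : Fin 2 → S → ℝ} (hε : εv < 1 / 2)
    (hμ0 : 0 ≤ μ) (hμ1 : μ ≤ 1) (hπ0 : ∀ ω t, 0 ≤ π ω t) :
    designerPay εv μ π ≤ 2 * μ / (1 - 2 * εv) * windowMass εv μ π := by
  rw [designerPay, windowMass, mul_sum]
  gcongr with t
  have hD : 0 ≤ μ * π 1 t + (1 - μ) * π 0 t := by
    have := hπ0 1 t
    have := hπ0 0 t
    have := sub_nonneg.2 hμ1
    positivity
  split_ifs with hc hc' hc'
  · obtain ⟨-, hlo, -⟩ := (inWindow_iff hε hD).1 hc'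
    rw [div_mul_eq_mul_div, le_div_iff₀ (by linarith)]
    linarith
  · exact absurd hc hc'
  · exact mul_nonneg (div_nonneg (by linarith) (by linarith)) (hπ0 1 t)
  · rw [mul_zero]

open Classical in
theorem card_filter_inWindow_le_one {εv x y : ℝ} {Γ : Finset ℝ} (hε0 : 0 < εv)
    (hε : εv ≤ 1 / 8) (hΓ : ∀ μ ∈ Γ, 0 ≤ μ ∧ μ ≤ 1)
    (hsep : ∀ μ ∈ Γ, ∀ μ' ∈ Γ, μ < μ' → μ + 4 * εv ≤ μ') (hx : 0 ≤ x) (hy : 0 ≤ y) :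
    (Γ.filter fun μ => InWindow εv μ x y).card ≤ 1 := by
  have key : ∀ μ ∈ Γ, ∀ μ' ∈ Γ, μ < μ' → InWindow εv μ x y → ¬ InWindow εv μ' x y :=
    fun μ hμ μ' hμ' hlt h =>
      h.not_inWindow_of_add_le hε0 hε (hΓ μ hμ).1 (hsep μ hμ μ' hμ' hlt) (hΓ μ' hμ').2 hx hy
  refine card_le_one.2 fun μ hμ μ' hμ' => ?_
  rw [mem_filter] at hμ hμ'
  rcases lt_trichotomy μ μ' with hlt | heq | hgt
  · exact absurd hμ'.2 (key μ hμ.1 μ' hμ'.1 hlt hμ.2)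
  · exact heq
  · exact absurd hμ.2 (key μ' hμ'.1 μ hμ.1 hgt hμ'.2)

open Classical in
theorem sum_windowMass_le_one {εv : ℝ} {Γ : Finset ℝ} {π : Fin 2 → S → ℝ} (hε0 : 0 < εv)
    (hε : εv ≤ 1 / 8) (hΓ : ∀ μ ∈ Γ, 0 ≤ μ ∧ μ ≤ 1)
    (hsep : ∀ μ ∈ Γ, ∀ μ' ∈ Γ, μ < μ' → μ + 4 * εv ≤ μ') (hπ0 : ∀ ω t, 0 ≤ π ω t)
    (hπ1 : ∑ t, π 1 t = 1) : ∑ μ ∈ Γ, windowMass εv μ π ≤ 1 := by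
  calc ∑ μ ∈ Γ, windowMass εv μ π
      = ∑ t, ((Γ.filter fun μ => InWindow εv μ (π 1 t) (π 0 t)).card : ℝ) * π 1 t := by
        simp only [windowMass]
        rw [sum_comm]
        refine sum_congr rfl fun t _ => ?_
        rw [← sum_filter, sum_const, nsmul_eq_mul]
    _ ≤ ∑ t, 1 * π 1 t := by
        gcongr with t
        · exact hπ0 1 t
        · exact_mod_cast card_filter_inWindow_le_one hε0 hε hΓ hsep (hπ0 1 t) (hπ0 0 t)
    _ = 1 := by simp [hπ1]

theorem mul_one_sub_windowMass_le_regret {εv p μ : ℝ} {π : Fin 2 → S → ℝ} (hε : εv < 1 / 2)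
    (hp : 0 ≤ p) (hpμ : p ≤ μ) (hμ : μ ≤ 1) (hπ0 : ∀ ω t, 0 ≤ π ω t)
    (hπ1 : ∑ t, π 1 t = 1) :
    2 * p / (1 - 2 * εv) * (1 - windowMass εv μ π) ≤
      2 * μ / (1 - 2 * εv) - designerPay εv μ π := by
  have hq := windowMass_le_one (εv := εv) (μ := μ) hπ0 hπ1
  have hpay := designerPay_le_mul_windowMass hε (hp.trans hpμ) hμ hπ0
  have hpμ' : 2 * p / (1 - 2 * εv) ≤ 2 * μ / (1 - 2 * εv) := by
    gcongr
    linarith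
  nlinarith [mul_le_mul_of_nonneg_right hpμ' (sub_nonneg.2 hq)]

end Scheme

theorem div_two_mul_le_sum_mul {ι : Type*} (s : Finset ι) (w q r : ι → ℝ) {B C : ℝ}
    (hB : 0 ≤ B) (hC : 0 < C) (hs : 2 ≤ s.card) (hw : ∀ i ∈ s, 1 / (C * s.card) ≤ w i)
    (hq : ∀ i ∈ s, q i ≤ 1) (hqs : ∑ i ∈ s, q i ≤ 1) (hr : ∀ i ∈ s, B * (1 - q i) ≤ r i) :
    B / (2 * C) ≤ ∑ i ∈ s, w i * r i := by
  have hN : (2 : ℝ) ≤ s.card := by exact_mod_cast hs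
  have hterm : ∀ i ∈ s, B / (C * s.card) * (1 - q i) ≤ w i * r i := fun i hi =>
    calc B / (C * s.card) * (1 - q i) = 1 / (C * s.card) * (B * (1 - q i)) := by ring
      _ ≤ 1 / (C * s.card) * r i := by gcongr; exact hr i hi
      _ ≤ w i * r i :=
        mul_le_mul_of_nonneg_right (hw i hi)
          ((mul_nonneg hB (sub_nonneg.2 (hq i hi))).trans (hr i hi))
  calc B / (2 * C) ≤ B / (C * s.card) * (s.card - 1) := by
        rw [div_mul_eq_mul_div, div_le_div_iff₀ (by positivity) (by positivity)]
        nlinarith [mul_nonneg (mul_nonneg hB hC.le) (sub_nonneg.2 hN)]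
    _ ≤ B / (C * s.card) * ∑ i ∈ s, (1 - q i) := by
        gcongr
        rw [sum_sub_distrib, sum_const, nsmul_eq_mul, mul_one]
        linarith
    _ = ∑ i ∈ s, B / (C * s.card) * (1 - q i) := mul_sum _ _ _
    _ ≤ ∑ i ∈ s, w i * r i := sum_le_sum hterm

theorem add_mul_add_le_of_lt {a κ : ℝ} (hκ : 0 < κ) {i j : ℕ} (h : a + i * κ < a + j * κ) :
    a + i * κ + κ ≤ a + j * κ := by
  have hij : i + 1 ≤ j := by
    have : (i : ℝ) < j := lt_of_mul_lt_mul_right (by linarith) hκ.le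
    exact_mod_cast this
  have : ((i : ℝ) + 1) * κ ≤ j * κ := by gcongr; exact_mod_cast hij
  linarith

theorem regret_roughly_uniform_belief_general
    {S : Type*} [Fintype S]
    (p0 κ εv C : ℝ) (Γ' : Finset ℝ) (P : ℝ → ℝ) (π : Fin 2 → S → ℝ)
    (hp0 : p0 = 1 / 10)
    (hκ0 : 0 < κ) (hκ : κ ≤ 2 * p0)
    (hεv : εv = κ / (40 * p0))
    (hC : 1 ≤ C)
    (hgrid : ∀ μ ∈ Γ', ∃ i : ℕ, μ = p0 + i * κ ∧ μ ≤ 3 * p0)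
    (hcard : 2 ≤ Γ'.card)
    (hPlb : ∀ μ ∈ Γ', 1 / (C * (Γ'.card : ℝ)) ≤ P μ)
    (hπ0 : ∀ ω t, 0 ≤ π ω t) (hπ1 : ∀ ω, ∑ t, π ω t = 1) :
    2 * p0 / (3 * (1 - 2 * εv) * C) ≤
      ∑ μ ∈ Γ', P μ * (2 * μ / (1 - 2 * εv) - designerPay εv μ π) := by
  subst hp0
  have hκε : κ = 4 * εv := by rw [hεv]; ring
  have hε0 : 0 < εv := by linarith
  have hε : εv ≤ 1 / 8 := by linarith
  have hbounds : ∀ μ ∈ Γ', 1 / 10 ≤ μ ∧ μ ≤ 3 / 10 := fun μ hμ => by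
    obtain ⟨i, rfl, hi⟩ := hgrid μ hμ
    have : 0 ≤ (i : ℝ) * κ := by positivity
    constructor <;> linarith
  have hΓ : ∀ μ ∈ Γ', 0 ≤ μ ∧ μ ≤ 1 := fun μ hμ => by
    constructor <;> linarith [hbounds μ hμ]
  have hsep : ∀ μ ∈ Γ', ∀ μ' ∈ Γ', μ < μ' → μ + 4 * εv ≤ μ' := fun μ hμ μ' hμ' hlt => by
    obtain ⟨i, rfl, -⟩ := hgrid μ hμ
    obtain ⟨j, rfl, -⟩ := hgrid μ' hμ'
    rw [← hκε]
    exact add_mul_add_le_of_lt hκ0 hlt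
  calc 2 * (1 / 10) / (3 * (1 - 2 * εv) * C) ≤ 2 * (1 / 10) / (1 - 2 * εv) / (2 * C) := by
        rw [div_div]
        exact div_le_div_of_nonneg_left (by norm_num) (by nlinarith) (by nlinarith)
    _ ≤ ∑ μ ∈ Γ', P μ * (2 * μ / (1 - 2 * εv) - designerPay εv μ π) :=
        div_two_mul_le_sum_mul Γ' P (windowMass εv · π) _ (div_nonneg (by norm_num) (by linarith))
          (by linarith) hcard hPlb (fun _ _ => windowMass_le_one hπ0 (hπ1 1))
          (sum_windowMass_le_one hε0 hε hΓ hsep hπ0 (hπ1 1))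
          fun μ hμ => mul_one_sub_windowMass_le_regret (by linarith) (by norm_num)
            (hbounds μ hμ).1 (hΓ μ hμ).2 hπ0 (hπ1 1)

/-- Lemma 7, single-period regret under a roughly uniform belief:
with `p0 = 1/10`, grid spacing `κ ∈ (0, 2p0]`, `εv = κ/(40p0)`, and a
`C`-roughly-uniform distribution `P'` over a subset `Γ' ⊆ Γ = {p0, p0+κ, …, 3p0}` of
at least two grid points, every signaling scheme incurs expected single-period regret
at least `2p0/(3(1−2εv)C)`. -/
theorem regret_roughly_uniform_belief
    {S : Type*} [Fintype S]
    (p0 κ εv C : ℝ) (Γ' : Finset ℝ) (P : ℝ → ℝ) (π : Fin 2 → S → ℝ)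
    (hp0 : p0 = 1 / 10)
    (hκ0 : 0 < κ) (hκ : κ ≤ 2 * p0)
    (hεv : εv = κ / (40 * p0))
    (hC : 1 ≤ C)
    (hgrid : ∀ μ ∈ Γ', ∃ i : ℕ, μ = p0 + i * κ ∧ μ ≤ 3 * p0)
    (hcard : 2 ≤ Γ'.card)
    (hP0 : ∀ μ ∈ Γ', 0 ≤ P μ) (hP1 : ∑ μ ∈ Γ', P μ = 1)
    (hPlb : ∀ μ ∈ Γ', 1 / (C * (Γ'.card : ℝ)) ≤ P μ)
    (hπ0 : ∀ ω t, 0 ≤ π ω t) (hπ1 : ∀ ω, ∑ t, π ω t = 1) :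
    2 * p0 / (3 * (1 - 2 * εv) * C) ≤
      ∑ μ ∈ Γ', P μ * (2 * μ / (1 - 2 * εv) - designerPay εv μ π) :=
  regret_roughly_uniform_belief_general p0 κ εv C Γ' P π hp0 hκ0 hκ hεv hC hgrid hcard hPlb hπ0 hπ1
end

section
/- Fix p0 = 1/10. Let T ≥ 1 be an integer, set Δ = √(9p0/T), let k ∈ {0, 1, …, T}, and write μ̄ = k/T. If μ1, μ2 ∈ [p0, 3p0] satisfy |μ1 − μ̄| ≤ Δ and |μ2 − μ̄| ≤ Δ, then the Bernoulli likelihoods satisfy μ1^k (1−μ1)^{T−k} ≤ e^{36} · μ2^k (1−μ2)^{T−k}. -/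
/-!
The log-likelihood `ℓ(μ) = k log μ + (T - k) log (1 - μ)` is concave, so it lies below its tangent
at `μ₂`: `ℓ(μ₁) - ℓ(μ₂) ≤ ℓ'(μ₂) (μ₁ - μ₂) = (k - T μ₂) (μ₁ - μ₂) / (μ₂ (1 - μ₂))`.
Since both parameters are within `Δ` of `μ̄ = k/T`, the numerator is `T (μ̄ - μ₂) (μ₁ - μ₂) ≤ 2 T Δ² = 9/5`,
and `μ₂ (1 - μ₂) ≥ 9/100` on `[p0, 3p0]`, so the exponent is at most `20`.
-/

open Real Set

lemma pow_le_exp_mul_pow {x y : ℝ} (hx : 0 ≤ x) (hy : 0 < y) (n : ℕ) :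
    x ^ n ≤ exp (n * (x - y) / y) * y ^ n := by
  have hratio : x / y ≤ exp ((x - y) / y) := by
    simpa [sub_div, div_self hy.ne'] using add_one_le_exp ((x - y) / y)
  calc x ^ n = (x / y) ^ n * y ^ n := by rw [div_pow, div_mul_cancel₀ _ (pow_ne_zero _ hy.ne')]
    _ ≤ exp ((x - y) / y) ^ n * y ^ n := by gcongr
    _ = exp (n * (x - y) / y) * y ^ n := by rw [← exp_nat_mul, mul_div_assoc]

/-- The tangent-line bound for the concave log-likelihood, with `a` successes and `b` failures. -/
lemma bernoulli_likelihood_le_exp_mul {μ₁ μ₂ : ℝ} (h₁ : μ₁ ∈ Icc 0 1) (h₂ : μ₂ ∈ Ioo 0 1)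
    (a b : ℕ) :
    μ₁ ^ a * (1 - μ₁) ^ b ≤
      exp ((a - (a + b) * μ₂) * (μ₁ - μ₂) / (μ₂ * (1 - μ₂))) * (μ₂ ^ a * (1 - μ₂) ^ b) := by
  obtain ⟨h₂₀, h₂₁⟩ := h₂
  have h₂₁' : 0 < 1 - μ₂ := sub_pos.2 h₂₁
  have hexponent : (a - (a + b) * μ₂) * (μ₁ - μ₂) / (μ₂ * (1 - μ₂)) =
      a * (μ₁ - μ₂) / μ₂ + b * ((1 - μ₁) - (1 - μ₂)) / (1 - μ₂) := by
    field_simp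
    ring
  rw [hexponent, exp_add, mul_mul_mul_comm]
  exact mul_le_mul (pow_le_exp_mul_pow h₁.1 h₂₀ a) (pow_le_exp_mul_pow (sub_nonneg.2 h₁.2) h₂₁' b)
    (pow_nonneg (sub_nonneg.2 h₁.2) b) (by positivity)

lemma sub_mul_sub_le_two_mul_sq {m μ₁ μ₂ δ : ℝ} (h₁ : |μ₁ - m| ≤ δ) (h₂ : |μ₂ - m| ≤ δ) :
    (m - μ₂) * (μ₁ - μ₂) ≤ 2 * δ ^ 2 := by
  rw [abs_le] at h₁ h₂
  nlinarith

theorem likelihood_ratio_bound_general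
    (T k : ℕ) (hk : k ≤ T)
    (μ1 μ2 : ℝ)
    (hμ1 : μ1 ∈ Set.Icc (1 / 10 : ℝ) (3 * (1 / 10)))
    (hμ2 : μ2 ∈ Set.Icc (1 / 10 : ℝ) (3 * (1 / 10)))
    (hd1 : |μ1 - (k : ℝ) / T| ≤ Real.sqrt (9 * (1 / 10) / T))
    (hd2 : |μ2 - (k : ℝ) / T| ≤ Real.sqrt (9 * (1 / 10) / T)) :
    μ1 ^ k * (1 - μ1) ^ (T - k) ≤ Real.exp 36 * (μ2 ^ k * (1 - μ2) ^ (T - k)) := by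
  obtain ⟨h1l, h1u⟩ := hμ1
  obtain ⟨h2l, h2u⟩ := hμ2
  have htangent := bernoulli_likelihood_le_exp_mul (μ₁ := μ1) ⟨by linarith, by linarith⟩
    ⟨by linarith, by linarith⟩ k (T - k)
  rw [Nat.cast_sub hk, add_sub_cancel] at htangent
  have hlikelihood : 0 ≤ μ2 ^ k * (1 - μ2) ^ (T - k) :=
    mul_nonneg (by positivity) (pow_nonneg (by linarith) _)
  refine htangent.trans (mul_le_mul_of_nonneg_right (exp_le_exp.2 ?_) hlikelihood)
  have hscale : (k : ℝ) - T * μ2 = T * (k / T - μ2) := by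
    rcases Nat.eq_zero_or_pos T with rfl | hT
    · simp [Nat.le_zero.mp hk]
    · field_simp
  have hdev := sub_mul_sub_le_two_mul_sq hd1 hd2
  rw [sq_sqrt (by positivity)] at hdev
  have hvariance : 9 / 100 ≤ μ2 * (1 - μ2) := by nlinarith
  rw [div_le_iff₀ (by positivity), hscale, mul_assoc]
  calc (T : ℝ) * ((k / T - μ2) * (μ1 - μ2)) ≤ T * (2 * (9 * (1 / 10) / T)) := by gcongr
    _ = 9 / 5 * (T / T) := by ring
    _ ≤ 9 / 5 := mul_le_of_le_one_right (by norm_num) (div_self_le_one _)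
    _ ≤ 36 * (μ2 * (1 - μ2)) := by linarith

/-- likelihood-ratio step of Lemma 8: with `p0 = 1/10` and
`Δ = √(9p0/T)`, any two Bernoulli parameters `μ1, μ2 ∈ [p0, 3p0]` that are within
distance `Δ` of the empirical mean `μ̄ = k/T` have Bernoulli likelihood ratio at
most `e^{36}`. -/
theorem likelihood_ratio_bound
    (T k : ℕ) (hT : 1 ≤ T) (hk : k ≤ T)
    (μ1 μ2 : ℝ)
    (hμ1 : μ1 ∈ Set.Icc (1 / 10 : ℝ) (3 * (1 / 10)))
    (hμ2 : μ2 ∈ Set.Icc (1 / 10 : ℝ) (3 * (1 / 10)))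
    (hd1 : |μ1 - (k : ℝ) / T| ≤ Real.sqrt (9 * (1 / 10) / T))
    (hd2 : |μ2 - (k : ℝ) / T| ≤ Real.sqrt (9 * (1 / 10) / T)) :
    μ1 ^ k * (1 - μ1) ^ (T - k) ≤ Real.exp 36 * (μ2 ^ k * (1 - μ2) ^ (T - k)) :=
  likelihood_ratio_bound_general T k hk μ1 μ2 hμ1 hμ2 hd1 hd2
end

section
/- For every p ∈ [0,1] and q ∈ (0,1), the Kullback–Leibler divergence between Bernoulli(p) and Bernoulli(q), namely D(p‖q) = p·log(p/q) + (1−p)·log((1−p)/(1−q)) with the convention 0·log 0 = 0, satisfies D(p‖q) ≤ 4(p−q)² / min(q, 1−q). -/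
/-!
Bounding each logarithm by `log x ≤ x - 1` dominates `D(p‖q)` by the χ²-divergence
`(p - q)² / (q (1 - q))`. Since `max q (1 - q) ≥ 1/2`, the variance `q (1 - q)` is at least
`min q (1 - q) / 2`, which gives the bound even with the constant `2` in place of `4`.
-/

open Real

lemma mul_log_div_le_mul_div_sub_one {a b : ℝ} (ha : 0 ≤ a) (hb : 0 < b) :
    a * log (a / b) ≤ a * (a / b - 1) := by
  rcases ha.eq_or_lt with rfl | ha
  · simp
  · exact mul_le_mul_of_nonneg_left (log_le_sub_one_of_pos (div_pos ha hb)) ha.le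

lemma bernoulli_kl_le_chiSq {p q : ℝ} (hp0 : 0 ≤ p) (hp1 : p ≤ 1) (hq0 : 0 < q) (hq1 : q < 1) :
    p * log (p / q) + (1 - p) * log ((1 - p) / (1 - q)) ≤ (p - q) ^ 2 / (q * (1 - q)) := by
  have hq1' : 0 < 1 - q := sub_pos.2 hq1
  calc p * log (p / q) + (1 - p) * log ((1 - p) / (1 - q))
      ≤ p * (p / q - 1) + (1 - p) * ((1 - p) / (1 - q) - 1) :=
        add_le_add (mul_log_div_le_mul_div_sub_one hp0 hq0)
          (mul_log_div_le_mul_div_sub_one (sub_nonneg.2 hp1) hq1')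
    _ = (p - q) ^ 2 / (q * (1 - q)) := by field_simp; ring

lemma min_div_two_le_mul_one_sub {q : ℝ} (hq0 : 0 ≤ q) (hq1 : q ≤ 1) :
    min q (1 - q) / 2 ≤ q * (1 - q) := by
  rcases min_cases q (1 - q) with ⟨hmin, hle⟩ | ⟨hmin, hlt⟩ <;> rw [hmin] <;> nlinarith

/-- reverse Pinsker inequality for Bernoulli distributions:
for `p ∈ [0,1]` and `q ∈ (0,1)`, the Kullback–Leibler divergence
`D(p‖q) = p·log(p/q) + (1−p)·log((1−p)/(1−q))` (with `0·log 0 = 0`) satisfies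
`D(p‖q) ≤ 4(p−q)²/min(q, 1−q)`. -/
theorem reverse_pinsker_bernoulli
    (p q : ℝ) (hp : p ∈ Set.Icc (0 : ℝ) 1) (hq : q ∈ Set.Ioo (0 : ℝ) 1) :
    p * Real.log (p / q) + (1 - p) * Real.log ((1 - p) / (1 - q)) ≤
      4 * (p - q) ^ 2 / min q (1 - q) := by
  obtain ⟨hp0, hp1⟩ := hp
  obtain ⟨hq0, hq1⟩ := hq
  have hmin : 0 < min q (1 - q) := lt_min hq0 (sub_pos.2 hq1)
  calc p * log (p / q) + (1 - p) * log ((1 - p) / (1 - q))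
      ≤ (p - q) ^ 2 / (q * (1 - q)) := bernoulli_kl_le_chiSq hp0 hp1 hq0 hq1
    _ ≤ (p - q) ^ 2 / (min q (1 - q) / 2) :=
        div_le_div_of_nonneg_left (sq_nonneg _) (half_pos hmin)
          (min_div_two_le_mul_one_sub hq0.le hq1.le)
    _ = 2 * (p - q) ^ 2 / min q (1 - q) := by field_simp
    _ ≤ 4 * (p - q) ^ 2 / min q (1 - q) := by gcongr; norm_num
end
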